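/- arXiv:2409.18525 — 4 statements merged into one kernel-verified Lean document; each statement's English description precedes it below -/
import Mathlib

section
/- Let Ω ⊆ ℝⁿ be open, let ω ∈ A_∞, and let φ(x,t) = t^{p(x)} where p : Ω → [1,∞] is measurable and 1/p satisfies the log-Hölder decay condition. Then φ satisfies (A2)_ω. -/
/-!
An `A_q` weight grows at most polynomially: Hölder's inequality on `B(0,1)` together with the
`A_q` condition on `B(0,R)` gives `ω(B(0,R)) ≲ R^{nq}`. Hence `h(x) = (e + |x|)^{-(nq+1)}` is
bounded and, summing over dyadic balls, lies in `L¹(ω)`.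

Given `s`, let `c` be the decay constant, `γ = nq + 1` and `β = min(1/max(s,1), e^{-2cγ})`;
then `βt ≤ 1` whenever `t^{p(y)} ≤ s`. Through `1/p_∞`, the decay condition gives
`1/p(x) - 1/p(y) ≤ c/log(e+|x|) + c/log(e+|y|)`. If `(βt)^{p(x)}` exceeds both `h(x)` and `h(y)`,
then with `L = -log(βt)` each of these two terms is below `cγ/(p(x) L)`; since
`L ≥ 2cγ - log t`, this forces `(βt)^{p(x)} ≤ t^{p(y)}` (and is impossible when `p(y) = ∞`).
-/

open MeasureTheory Metric Filter Set
open scoped ENNReal NNReal Topology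

noncomputable section

/-- `ℝⁿ` with Lebesgue measure. -/
abbrev Rn (n : ℕ) : Type := EuclideanSpace ℝ (Fin n)

/-- The `ω`-measure of a set `E`, `ω(E) = ∫_E ω(x) dx`. -/
def wSet {n : ℕ} (ω : Rn n → ℝ≥0∞) (E : Set (Rn n)) : ℝ≥0∞ := ∫⁻ x in E, ω x

/-- A weight: a measurable, a.e. positive and finite, locally integrable function. -/
def IsWeight {n : ℕ} (ω : Rn n → ℝ≥0∞) : Prop :=
  Measurable ω ∧ (∀ᵐ x ∂(volume : Measure (Rn n)), 0 < ω x ∧ ω x < ∞) ∧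
    ∀ (z : Rn n) (r : ℝ), 0 < r → wSet ω (ball z r) ≠ ∞

/-- The Muckenhoupt class `A_q`, `1 < q < ∞`:
`sup_B |B|^{-q} ω(B) (∫_B ω^{-q'/q})^{q-1} < ∞` where `q'/q = 1/(q-1)`. -/
def MuckenhouptAq {n : ℕ} (q : ℝ) (ω : Rn n → ℝ≥0∞) : Prop :=
  IsWeight ω ∧ ∃ C : ℝ≥0∞, C ≠ ∞ ∧ ∀ (z : Rn n) (r : ℝ), 0 < r →
    (volume (ball z r)) ^ (-q) * wSet ω (ball z r) *
      (∫⁻ y in ball z r, (ω y) ^ (-(1 / (q - 1)))) ^ (q - 1) ≤ C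

/-- The class `A_∞ = ⋃_{1<q<∞} A_q`. -/
def MuckenhouptAinfty {n : ℕ} (ω : Rn n → ℝ≥0∞) : Prop :=
  ∃ q : ℝ, 1 < q ∧ MuckenhouptAq q ω

/-- `(aInc)_p`: `t ↦ φ(x,t)/t^p` is almost increasing, uniformly in a.e. `x ∈ Ω`. -/
def AInc {n : ℕ} (Ω : Set (Rn n)) (φ : Rn n → ℝ≥0∞ → ℝ≥0∞) (p : ℝ) : Prop :=
  ∃ a : ℝ≥0, 1 ≤ a ∧ ∀ᵐ x ∂(volume : Measure (Rn n)), x ∈ Ω →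
    ∀ s t : ℝ≥0, 0 < s → s < t →
      φ x s / (s : ℝ≥0∞) ^ p ≤ a * (φ x t / (t : ℝ≥0∞) ^ p)

/-- A weak Φ-function on `Ω`. -/
structure IsWeakPhi {n : ℕ} (Ω : Set (Rn n)) (φ : Rn n → ℝ≥0∞ → ℝ≥0∞) : Prop where
  meas : ∀ f : Rn n → ℝ≥0∞, Measurable f → Measurable fun x => φ x (f x)
  mono : ∀ᵐ x ∂(volume : Measure (Rn n)), x ∈ Ω → Monotone (φ x)
  map_zero : ∀ᵐ x ∂(volume : Measure (Rn n)), x ∈ Ω → φ x 0 = 0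
  tendsto_zero : ∀ᵐ x ∂(volume : Measure (Rn n)), x ∈ Ω →
    Tendsto (fun t : ℝ≥0 => φ x t) (𝓝[>] 0) (𝓝 0)
  tendsto_top : ∀ᵐ x ∂(volume : Measure (Rn n)), x ∈ Ω →
    Tendsto (fun t : ℝ≥0 => φ x t) atTop (𝓝 ∞)
  aInc_one : AInc Ω φ 1

/-- Condition (A0). -/
def A0 {n : ℕ} (Ω : Set (Rn n)) (φ : Rn n → ℝ≥0∞ → ℝ≥0∞) : Prop :=
  ∃ β₀ : ℝ≥0, 0 < β₀ ∧ β₀ ≤ 1 ∧ ∀ᵐ x ∂(volume : Measure (Rn n)), x ∈ Ω →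
    φ x β₀ ≤ 1 ∧ 1 ≤ φ x ((β₀ : ℝ≥0∞)⁻¹)

/-- Condition (A1)_ω. -/
def A1w {n : ℕ} (Ω : Set (Rn n)) (ω : Rn n → ℝ≥0∞) (φ : Rn n → ℝ≥0∞ → ℝ≥0∞) : Prop :=
  ∃ β₁ : ℝ≥0, 0 < β₁ ∧ β₁ ≤ 1 ∧ ∀ (z : Rn n) (r : ℝ), 0 < r → wSet ω (ball z r) ≤ 1 →
    ∀ᵐ x ∂(volume : Measure (Rn n)), ∀ᵐ y ∂(volume : Measure (Rn n)),
      x ∈ ball z r ∩ Ω → y ∈ ball z r ∩ Ω →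
        ∀ t : ℝ≥0, 1 ≤ φ y t → φ y t ≤ (wSet ω (ball z r))⁻¹ →
          φ x (β₁ * t) ≤ φ y t

/-- `h ∈ L¹(Ω,ω) ∩ L^∞(Ω)`, `h ≥ 0`. -/
def MemL1wLinf {n : ℕ} (Ω : Set (Rn n)) (ω : Rn n → ℝ≥0∞) (h : Rn n → ℝ≥0) : Prop :=
  Measurable h ∧ (∫⁻ x in Ω, (h x : ℝ≥0∞) * ω x) ≠ ∞ ∧
    ∃ C : ℝ≥0, ∀ᵐ x ∂(volume : Measure (Rn n)), x ∈ Ω → h x ≤ C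

/-- Condition (A2)_ω. -/
def A2w {n : ℕ} (Ω : Set (Rn n)) (ω : Rn n → ℝ≥0∞) (φ : Rn n → ℝ≥0∞ → ℝ≥0∞) : Prop :=
  ∀ s : ℝ≥0, 0 < s → ∃ β₂ : ℝ≥0, 0 < β₂ ∧ β₂ ≤ 1 ∧ ∃ h : Rn n → ℝ≥0,
    MemL1wLinf Ω ω h ∧
      ∀ᵐ x ∂(volume : Measure (Rn n)), ∀ᵐ y ∂(volume : Measure (Rn n)),
        x ∈ Ω → y ∈ Ω → ∀ t : ℝ≥0, φ y t ≤ s →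
          φ x (β₂ * t) ≤ φ y t + h x + h y

/-- The weighted modular `ρ_φ^ω(g) = ∫_Ω φ(x, g(x)) ω(x) dx` (applied to `g = |f|`). -/
def wModular {n : ℕ} (Ω : Set (Rn n)) (ω : Rn n → ℝ≥0∞) (φ : Rn n → ℝ≥0∞ → ℝ≥0∞)
    (g : Rn n → ℝ≥0∞) : ℝ≥0∞ := ∫⁻ x in Ω, φ x (g x) * ω x

/-- The weighted Luxemburg norm `‖f‖_{L^φ(Ω,ω)}` (applied to `g = |f|`). -/
def wNorm {n : ℕ} (Ω : Set (Rn n)) (ω : Rn n → ℝ≥0∞) (φ : Rn n → ℝ≥0∞ → ℝ≥0∞)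
    (g : Rn n → ℝ≥0∞) : ℝ≥0∞ :=
  ⨅ (lam : ℝ≥0) (_ : 0 < lam)
    (_ : wModular Ω ω φ (fun x => g x / lam) ≤ 1), (lam : ℝ≥0∞)

/-- Membership in the weighted generalized Orlicz space `L^φ(Ω,ω)` (applied to `g = |f|`). -/
def MemLw {n : ℕ} (Ω : Set (Rn n)) (ω : Rn n → ℝ≥0∞) (φ : Rn n → ℝ≥0∞ → ℝ≥0∞)
    (g : Rn n → ℝ≥0∞) : Prop :=
  ∃ lam : ℝ≥0, 0 < lam ∧ wModular Ω ω φ (fun x => g x / lam) ≤ 1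

/-- The Hardy–Littlewood maximal operator (relative to `Ω`), applied to `g = |f|`. -/
def maximal {n : ℕ} (Ω : Set (Rn n)) (g : Rn n → ℝ≥0∞) (x : Rn n) : ℝ≥0∞ :=
  ⨆ (z : Rn n) (r : ℝ) (_ : 0 < r) (_ : x ∈ ball z r),
    (volume (ball z r))⁻¹ * ∫⁻ y in ball z r ∩ Ω, g y

/-- An `x`-independent weak Φ-function. -/
structure IsWeakPhi0 (ψ : ℝ≥0∞ → ℝ≥0∞) : Prop where
  mono : Monotone ψ
  map_zero : ψ 0 = 0
  tendsto_zero : Tendsto (fun t : ℝ≥0 => ψ t) (𝓝[>] 0) (𝓝 0)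
  tendsto_top : Tendsto (fun t : ℝ≥0 => ψ t) atTop (𝓝 ∞)
  aInc_one : ∃ a : ℝ≥0, 1 ≤ a ∧ ∀ s t : ℝ≥0, 0 < s → s < t →
    ψ s / (s : ℝ≥0∞) ≤ a * (ψ t / (t : ℝ≥0∞))

/-- The real-valued reciprocal `1/p(x)` of an exponent `p : Ω → [1,∞]` (with `1/∞ = 0`). -/
def invExp {n : ℕ} (p : Rn n → ℝ≥0∞) (x : Rn n) : ℝ := ((p x)⁻¹).toReal

/-- Local log-Hölder continuity of `g` on `Ω`. -/
def LocallyLogHolder {n : ℕ} (Ω : Set (Rn n)) (g : Rn n → ℝ) : Prop :=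
  ∃ c : ℝ, 0 < c ∧ ∀ x ∈ Ω, ∀ y ∈ Ω,
    |g x - g y| ≤ c / Real.log (Real.exp 1 + 1 / dist x y)

/-- The log-Hölder decay condition for `g` with limit `g∞`. -/
def LogHolderDecay {n : ℕ} (Ω : Set (Rn n)) (g : Rn n → ℝ) (ginf : ℝ) : Prop :=
  ∃ c : ℝ, 0 < c ∧ ∀ x ∈ Ω, |g x - ginf| ≤ c / Real.log (Real.exp 1 + ‖x‖)

/-- `1/p ∈ P^log(Ω)`: local log-Hölder continuity plus log-Hölder decay. -/
def PLog {n : ℕ} (Ω : Set (Rn n)) (p : Rn n → ℝ≥0∞) : Prop :=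
  LocallyLogHolder Ω (invExp p) ∧
    ∃ pinf : ℝ≥0∞, 1 ≤ pinf ∧ LogHolderDecay Ω (invExp p) ((pinf)⁻¹).toReal

/-- The variable exponent Φ-function `φ(x,t) = t^{p(x)}`, with
`t^∞ := ∞·χ_{(1,∞)}(t)`. -/
def varExp {n : ℕ} (p : Rn n → ℝ≥0∞) (x : Rn n) (t : ℝ≥0∞) : ℝ≥0∞ :=
  if p x = ∞ then (if t ≤ 1 then 0 else ∞) else t ^ (p x).toReal

/-- The double phase functional `φ(x,t) = t^p + a(x) t^q`. -/
def doublePhase {n : ℕ} (a : Rn n → ℝ) (p q : ℝ) (x : Rn n) (t : ℝ≥0∞) : ℝ≥0∞ :=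
  t ^ p + ENNReal.ofReal (a x) * t ^ q

theorem measure_rpow_le_lintegral_mul_lintegral_rpow {α : Type*} [MeasurableSpace α]
    {μ : Measure α} {ω : α → ℝ≥0∞} (hω : Measurable ω) (hpos : ∀ᵐ x ∂μ, 0 < ω x ∧ ω x < ∞)
    {q : ℝ} (hq : 1 < q) (E : Set α) :
    μ E ^ q ≤ (∫⁻ x in E, ω x ∂μ) * (∫⁻ x in E, ω x ^ (-(1 / (q - 1))) ∂μ) ^ (q - 1) := by
  have hq0 : 0 < q := one_pos.trans hq
  have hone : ∀ᵐ x ∂μ.restrict E, ω x ^ (1 / q) * ω x ^ (-(1 / q)) = 1 := by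
    filter_upwards [ae_restrict_of_ae hpos] with x hx
    rw [← ENNReal.rpow_add _ _ hx.1.ne' hx.2.ne, add_neg_cancel, ENNReal.rpow_zero]
  have holder := ENNReal.lintegral_mul_le_Lp_mul_Lq (μ.restrict E)
    (Real.HolderConjugate.conjExponent hq) (hω.pow_const (1 / q)).aemeasurable
    (hω.pow_const (-(1 / q))).aemeasurable
  have hexp : ∀ x, (ω x ^ (-(1 / q))) ^ (q / (q - 1)) = ω x ^ (-(1 / (q - 1))) := fun x => by
    rw [← ENNReal.rpow_mul]; congr 1; field_simp
  simp only [Pi.mul_apply, Real.conjExponent, ← ENNReal.rpow_mul, one_div_mul_cancel hq0.ne',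
    ENNReal.rpow_one, hexp] at holder
  rw [lintegral_congr_ae hone, setLIntegral_one] at holder
  calc μ E ^ q
      ≤ ((∫⁻ x in E, ω x ∂μ) ^ (1 / q) *
          (∫⁻ x in E, ω x ^ (-(1 / (q - 1))) ∂μ) ^ (1 / (q / (q - 1)))) ^ q :=
        ENNReal.rpow_le_rpow holder hq0.le
    _ = _ := by
      rw [ENNReal.mul_rpow_of_nonneg _ _ hq0.le, ← ENNReal.rpow_mul, ← ENNReal.rpow_mul,
        one_div_mul_cancel hq0.ne', ENNReal.rpow_one]
      congr 2
      field_simp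

namespace MuckenhouptAq

variable {n : ℕ} {q : ℝ} {ω : Rn n → ℝ≥0∞}

theorem wSet_mul_volume_rpow_le (hq : 1 < q) (hω : MuckenhouptAq q ω) :
    ∃ C : ℝ≥0∞, C ≠ ∞ ∧ ∀ (z : Rn n) (R : ℝ), 0 < R → ∀ E ⊆ ball z R,
      wSet ω (ball z R) * volume E ^ q ≤ C * volume (ball z R) ^ q * wSet ω E := by
  obtain ⟨⟨hmeas, hpos, -⟩, C, hC, hAq⟩ := hω
  refine ⟨C, hC, fun z R hR E hE => ?_⟩
  set B := ball z R
  set σB := ∫⁻ y in B, ω y ^ (-(1 / (q - 1)))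
  have hB0 : volume B ≠ 0 := (measure_ball_pos volume z hR).ne'
  have hBtop : volume B ≠ ∞ := measure_ball_lt_top.ne
  have hvol : volume B ^ q * volume B ^ (-q) = 1 := by
    rw [← ENNReal.rpow_add _ _ hB0 hBtop, add_neg_cancel, ENNReal.rpow_zero]
  calc wSet ω B * volume E ^ q
      ≤ wSet ω B * (wSet ω E * σB ^ (q - 1)) := by
        gcongr
        exact (measure_rpow_le_lintegral_mul_lintegral_rpow hmeas hpos hq E).trans
          (mul_le_mul_right (ENNReal.rpow_le_rpow (lintegral_mono_set hE) (by linarith)) _)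
    _ = volume B ^ q * (volume B ^ (-q) * wSet ω B * σB ^ (q - 1)) * wSet ω E := by
        rw [← one_mul (wSet ω B * _), ← hvol]; ring
    _ ≤ volume B ^ q * C * wSet ω E := by gcongr; exact hAq z R hR
    _ = C * volume B ^ q * wSet ω E := by ring

theorem wSet_ball_zero_le (hq : 1 < q) (hω : MuckenhouptAq q ω) :
    ∃ K : ℝ≥0∞, K ≠ ∞ ∧ ∀ R : ℝ, 1 ≤ R →
      wSet ω (ball (0 : Rn n) R) ≤ K * ENNReal.ofReal (R ^ ((n : ℝ) * q)) := by
  obtain ⟨C, hC, hdoubling⟩ := wSet_mul_volume_rpow_le hq hω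
  refine ⟨C * wSet ω (ball 0 1), ENNReal.mul_ne_top hC (hω.1.2.2 0 1 one_pos), fun R hR => ?_⟩
  have hR0 : 0 < R := one_pos.trans_le hR
  set V := volume (ball (0 : Rn n) 1)
  have hV0 : V ^ q ≠ 0 :=
    (ENNReal.rpow_pos (measure_ball_pos volume 0 one_pos) measure_ball_lt_top.ne).ne'
  have hVtop : V ^ q ≠ ∞ := ENNReal.rpow_ne_top_of_nonneg (by linarith) measure_ball_lt_top.ne
  have hscale : volume (ball (0 : Rn n) R) ^ q = ENNReal.ofReal (R ^ ((n : ℝ) * q)) * V ^ q := by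
    rw [Measure.addHaar_ball_of_pos volume _ hR0, finrank_euclideanSpace_fin,
      ENNReal.mul_rpow_of_nonneg _ _ (by linarith), ENNReal.ofReal_rpow_of_nonneg (by positivity)
        (by linarith), ← Real.rpow_natCast, ← Real.rpow_mul hR0.le]
  refine (ENNReal.mul_le_mul_iff_left hV0 hVtop).mp ?_
  calc wSet ω (ball 0 R) * V ^ q
      ≤ C * volume (ball (0 : Rn n) R) ^ q * wSet ω (ball 0 1) :=
        hdoubling 0 R hR0 _ (ball_subset_ball hR)
    _ = C * wSet ω (ball 0 1) * ENNReal.ofReal (R ^ ((n : ℝ) * q)) * V ^ q := by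
        rw [hscale]; ring

end MuckenhouptAq

section powDecay

variable {E : Type*} [NormedAddCommGroup E]

def powDecay (γ : ℝ) (x : E) : ℝ≥0 :=
  ⟨(Real.exp 1 + ‖x‖) ^ (-γ), Real.rpow_nonneg (by positivity) _⟩

theorem one_lt_exp_one_add_norm (x : E) : 1 < Real.exp 1 + ‖x‖ := by
  linarith [Real.add_one_lt_exp one_ne_zero, norm_nonneg x]

theorem powDecay_le_one {γ : ℝ} (hγ : 0 ≤ γ) (x : E) : powDecay γ x ≤ 1 :=
  Real.rpow_le_one_of_one_le_of_nonpos (one_lt_exp_one_add_norm x).le (neg_nonpos.mpr hγ)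

theorem coe_rpow_le_powDecay {u : ℝ≥0} {a γ : ℝ} {x : E} (ha : 0 ≤ a)
    (h : (u : ℝ) ^ a ≤ (Real.exp 1 + ‖x‖) ^ (-γ)) : (u : ℝ≥0∞) ^ a ≤ powDecay γ x := by
  rw [← ENNReal.coe_rpow_of_nonneg u ha, ENNReal.coe_le_coe, ← NNReal.coe_le_coe, NNReal.coe_rpow]
  exact h

variable [MeasurableSpace E] [OpensMeasurableSpace E]

theorem measurable_powDecay (γ : ℝ) : Measurable (powDecay (E := E) γ) :=
  ((measurable_const.add measurable_norm).pow_const _).subtype_mk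

theorem lintegral_powDecay_ne_top {μ : Measure E} {K : ℝ≥0∞} (hK : K ≠ ∞) {d : ℝ} (hd : 0 ≤ d)
    (hμ : ∀ R : ℝ, 1 ≤ R → μ (ball 0 R) ≤ K * ENNReal.ofReal (R ^ d)) :
    ∫⁻ x, powDecay (d + 1) x ∂μ ≠ ∞ := by
  set a : ℕ → ℝ≥0∞ := fun k => ENNReal.ofReal (((2 : ℝ) ^ k) ^ (-(d + 1)))
  have hdyadic : ∀ x : E,
      (powDecay (d + 1) x : ℝ≥0∞) ≤ ∑' k, (ball 0 (2 ^ (k + 1))).indicator (fun _ => a k) x := by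
    intro x
    obtain ⟨k, hk, hk'⟩ :=
      exists_nat_pow_near (le_add_of_nonneg_right (norm_nonneg x)) (one_lt_two (α := ℝ))
    refine le_trans ?_ (ENNReal.le_tsum k)
    rw [indicator_of_mem (mem_ball_zero_iff.mpr (by linarith)), ENNReal.coe_nnreal_eq]
    exact ENNReal.ofReal_le_ofReal (Real.rpow_le_rpow_of_nonpos (by positivity)
      (by linarith [Real.add_one_lt_exp one_ne_zero]) (by linarith))
  have hterm : ∀ k : ℕ, a k * μ (ball 0 (2 ^ (k + 1))) ≤
      K * ENNReal.ofReal (2 ^ d) * 2⁻¹ ^ k := by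
    intro k
    have hexp : ((2 : ℝ) ^ k) ^ (-(d + 1)) * ((2 : ℝ) ^ (k + 1)) ^ d = 2 ^ d * 2⁻¹ ^ k := by
      rw [← Real.rpow_natCast 2 k, ← Real.rpow_natCast 2 (k + 1), ← Real.rpow_mul zero_le_two,
        ← Real.rpow_mul zero_le_two, ← Real.rpow_add two_pos, inv_pow, ← Real.rpow_natCast,
        ← Real.rpow_neg zero_le_two, ← Real.rpow_add two_pos]
      congr 1
      push_cast
      ring
    calc a k * μ (ball 0 (2 ^ (k + 1)))
        ≤ a k * (K * ENNReal.ofReal (((2 : ℝ) ^ (k + 1)) ^ d)) :=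
          mul_le_mul_right (hμ _ (one_le_pow₀ one_le_two)) _
      _ = K * ENNReal.ofReal (2 ^ d * 2⁻¹ ^ k) := by
          rw [← hexp, ENNReal.ofReal_mul (by positivity)]; ring
      _ = K * ENNReal.ofReal (2 ^ d) * 2⁻¹ ^ k := by
          rw [ENNReal.ofReal_mul (by positivity), ENNReal.ofReal_pow (by positivity),
            ENNReal.ofReal_inv_of_pos two_pos, ENNReal.ofReal_ofNat, mul_assoc]
  have hgeom : ∑' k : ℕ, (2⁻¹ : ℝ≥0∞) ^ k ≠ ∞ := by
    rw [ENNReal.tsum_geometric_two]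
    exact ENNReal.ofNat_ne_top
  refine ne_top_of_le_ne_top (b := K * ENNReal.ofReal (2 ^ d) * ∑' k : ℕ, (2⁻¹ : ℝ≥0∞) ^ k)
    (ENNReal.mul_ne_top (ENNReal.mul_ne_top hK ENNReal.ofReal_ne_top) hgeom)
    ((lintegral_mono hdyadic).trans ?_)
  rw [lintegral_tsum fun k => (measurable_const.indicator measurableSet_ball).aemeasurable,
    ← ENNReal.tsum_mul_left]
  refine ENNReal.tsum_le_tsum fun k => ?_
  rw [lintegral_indicator_const measurableSet_ball]
  exact hterm k

end powDecay

theorem MuckenhouptAq.lintegral_powDecay_mul_ne_top {n : ℕ} {q : ℝ} {ω : Rn n → ℝ≥0∞}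
    (hq : 1 < q) (hω : MuckenhouptAq q ω) :
    ∫⁻ x, (powDecay ((n : ℝ) * q + 1) x : ℝ≥0∞) * ω x ≠ ∞ := by
  obtain ⟨K, hK, hgrowth⟩ := hω.wSet_ball_zero_le hq
  have hint := lintegral_powDecay_ne_top (μ := volume.withDensity ω) (d := n * q) hK
    (by have := one_pos.trans hq; positivity) fun R hR => by
      rw [withDensity_apply _ measurableSet_ball]; exact hgrowth R hR
  rw [lintegral_withDensity_eq_lintegral_mul _ hω.1.1
    (measurable_coe_nnreal_ennreal_iff.mpr (measurable_powDecay _))] at hint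
  simpa only [Pi.mul_apply, mul_comm] using hint

theorem rpow_le_or_rpow_le_or_rpow_mul_lt {c γ a r X Y t u : ℝ} (hc : 0 < c) (hγ : 0 < γ)
    (ha : 0 < a) (hX : 1 < X) (hY : 1 < Y) (ht : t ≤ 1) (hu : 0 < u)
    (hut : u ≤ Real.exp (-(2 * c * γ)) * t)
    (hr : 1 / a - r ≤ c / Real.log X + c / Real.log Y) :
    u ^ a ≤ X ^ (-γ) ∨ u ^ a ≤ Y ^ (-γ) ∨ u ^ (a * r) < t := by
  by_contra! h
  obtain ⟨hXu, hYu, htu⟩ := h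
  have ht0 : 0 < t := pos_of_mul_pos_right (hu.trans_le hut) (Real.exp_pos _).le
  set L := -Real.log u
  have hlogu : Real.log u ≤ -(2 * c * γ) + Real.log t := by
    simpa [Real.log_mul (Real.exp_pos _).ne' ht0.ne'] using Real.log_le_log hu hut
  have hlogt : Real.log t ≤ a * r * Real.log u := by
    simpa [Real.log_rpow hu] using Real.log_le_log ht0 htu
  have hL : 0 < L := by linarith [Real.log_nonpos ht0.le ht, mul_pos hc hγ]
  have haL : 0 < a * L := mul_pos ha hL
  have hsmall : ∀ {Z : ℝ}, 1 < Z → Z ^ (-γ) < u ^ a → c / Real.log Z < c * γ / (a * L) := by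
    intro Z hZ hZu
    have hlog := Real.log_lt_log (Real.rpow_pos_of_pos (by linarith) _) hZu
    rw [Real.log_rpow (by linarith), Real.log_rpow hu] at hlog
    rw [div_lt_div_iff₀ (Real.log_pos hZ) haL]
    nlinarith
  have hsum : (1 / a - r) * (a * L) < 2 * c * γ := by
    rw [← lt_div_iff₀ haL, show 2 * c * γ / (a * L) = c * γ / (a * L) + c * γ / (a * L) by ring]
    exact hr.trans_lt (add_lt_add (hsmall hX hXu) (hsmall hY hYu))
  have hexpand : (1 / a - r) * (a * L) = L - a * r * L := by field_simp
  linarith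

theorem ENNReal.one_le_toReal {a : ℝ≥0∞} (ha : 1 ≤ a) (ha' : a ≠ ∞) : 1 ≤ a.toReal := by
  simpa using ENNReal.toReal_mono ha' ha

section varExp

variable {n : ℕ} {p : Rn n → ℝ≥0∞} {x y : Rn n}

theorem varExp_of_ne_top {t : ℝ≥0∞} (hx : p x ≠ ∞) : varExp p x t = t ^ (p x).toReal :=
  if_neg hx

theorem varExp_of_eq_top {t : ℝ≥0∞} (hx : p x = ∞) (ht : t ≤ 1) : varExp p x t = 0 := by
  simp [varExp, hx, ht]

theorem self_le_varExp {t : ℝ≥0∞} (hp : 1 ≤ p x) (ht : 1 < t) : t ≤ varExp p x t := by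
  rcases eq_or_ne (p x) ∞ with hx | hx
  · simp [varExp, hx, not_le.mpr ht]
  · rw [varExp_of_ne_top hx]
    simpa using ENNReal.rpow_le_rpow_of_exponent_le ht.le (ENNReal.one_le_toReal hp hx)

theorem le_max_of_varExp_le {s t : ℝ≥0∞} (hp : 1 ≤ p x) (hs : varExp p x t ≤ s) :
    t ≤ max s 1 := by
  rcases le_or_gt t 1 with ht | ht
  · exact le_max_of_le_right ht
  · exact le_max_of_le_left ((self_le_varExp hp ht).trans hs)

theorem rpow_le_varExp_of_rpow_mul_invExp_lt (hp : p y ≠ 0) {u t : ℝ≥0} {a : ℝ} (ha : 0 ≤ a)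
    (ht : t ≤ 1) (hut : (u : ℝ) ^ (a * invExp p y) < t) : (u : ℝ≥0∞) ^ a ≤ varExp p y t := by
  rcases eq_or_ne (p y) ∞ with hy | hy
  · have : (1 : ℝ) < t := by simpa [invExp, hy] using hut
    exact absurd (NNReal.coe_le_one.mpr ht) this.not_ge
  set b := (p y).toReal
  have hb : 0 < b := ENNReal.toReal_pos hp hy
  have hinvy : invExp p y = b⁻¹ := by simp [invExp, b]
  rw [hinvy] at hut
  have hle : (u : ℝ) ^ a ≤ (t : ℝ) ^ b :=
    calc (u : ℝ) ^ a = ((u : ℝ) ^ (a * b⁻¹)) ^ b := by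
          rw [← Real.rpow_mul u.coe_nonneg, inv_mul_cancel_right₀ hb.ne']
      _ ≤ (t : ℝ) ^ b := Real.rpow_le_rpow (by positivity) hut.le hb.le
  rw [varExp_of_ne_top hy, ENNReal.coe_nnreal_eq u, ENNReal.coe_nnreal_eq t,
    ENNReal.ofReal_rpow_of_nonneg u.coe_nonneg ha, ENNReal.ofReal_rpow_of_nonneg t.coe_nonneg hb.le]
  exact ENNReal.ofReal_le_ofReal hle

theorem varExp_mul_le_add_powDecay {c γ : ℝ} (hc : 0 < c) (hγ : 0 < γ) (hpx : 1 ≤ p x)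
    (hpy : 1 ≤ p y)
    (hxy : invExp p x - invExp p y ≤
      c / Real.log (Real.exp 1 + ‖x‖) + c / Real.log (Real.exp 1 + ‖y‖))
    {β t : ℝ≥0} (hβ : (β : ℝ) ≤ Real.exp (-(2 * c * γ))) (hβt : β * t ≤ 1) :
    varExp p x (β * t) ≤ varExp p y t + powDecay γ x + powDecay γ y := by
  rw [← ENNReal.coe_mul]
  set u := β * t
  rcases eq_or_ne (p x) ∞ with hx | hx
  · rw [varExp_of_eq_top hx (ENNReal.coe_le_one_iff.mpr hβt)]
    exact zero_le
  rw [varExp_of_ne_top hx]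
  set a := (p x).toReal
  have ha : 1 ≤ a := ENNReal.one_le_toReal hpx hx
  rcases eq_or_ne u 0 with hu | hu
  · simp [hu, ENNReal.zero_rpow_of_pos (one_pos.trans_le ha)]
  rcases lt_or_ge 1 t with ht | ht
  · have ht' : (1 : ℝ≥0∞) < t := ENNReal.one_lt_coe_iff.mpr ht
    calc (u : ℝ≥0∞) ^ a ≤ 1 := ENNReal.rpow_le_one (ENNReal.coe_le_one_iff.mpr hβt) (by linarith)
      _ ≤ varExp p y t := ht'.le.trans (self_le_varExp hpy ht')
      _ ≤ _ := le_self_add.trans le_self_add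
  have hinvx : invExp p x = 1 / a := by simp [invExp, a]
  have hut : (u : ℝ) ≤ Real.exp (-(2 * c * γ)) * t := by
    rw [NNReal.coe_mul]; exact mul_le_mul_of_nonneg_right hβ t.coe_nonneg
  rcases rpow_le_or_rpow_le_or_rpow_mul_lt hc hγ (by linarith) (one_lt_exp_one_add_norm x)
      (one_lt_exp_one_add_norm y) (NNReal.coe_le_one.mpr ht)
      (NNReal.coe_pos.mpr (pos_iff_ne_zero.mpr hu)) hut (hinvx ▸ hxy) with hux | huy | hut
  · exact (coe_rpow_le_powDecay (by linarith) hux).trans (le_add_self.trans le_self_add)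
  · exact (coe_rpow_le_powDecay (by linarith) huy).trans le_add_self
  · exact (rpow_le_varExp_of_rpow_mul_invExp_lt (zero_lt_one.trans_le hpy).ne' (by linarith) ht
      hut).trans (le_self_add.trans le_self_add)

end varExp

theorem LogHolderDecay.exists_abs_sub_le {n : ℕ} {Ω : Set (Rn n)} {g : Rn n → ℝ} {ginf : ℝ}
    (hg : LogHolderDecay Ω g ginf) :
    ∃ c : ℝ, 0 < c ∧ ∀ x ∈ Ω, ∀ y ∈ Ω,
      |g x - g y| ≤ c / Real.log (Real.exp 1 + ‖x‖) + c / Real.log (Real.exp 1 + ‖y‖) := by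
  obtain ⟨c, hc, hdecay⟩ := hg
  refine ⟨c, hc, fun x hx y hy => ?_⟩
  calc |g x - g y| ≤ |g x - ginf| + |ginf - g y| := abs_sub_le _ _ _
    _ ≤ _ := add_le_add (hdecay x hx) (abs_sub_comm ginf (g y) ▸ hdecay y hy)

theorem varExp_A2w_general
    (n : ℕ) (Ω : Set (Rn n))
    (ω : Rn n → ℝ≥0∞) (hω : MuckenhouptAinfty ω)
    (p : Rn n → ℝ≥0∞) (hp1 : ∀ x ∈ Ω, 1 ≤ p x)
    (pinf : ℝ≥0∞)
    (hdecay : LogHolderDecay Ω (invExp p) ((pinf)⁻¹).toReal) :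
    A2w Ω ω (varExp p) := by
  obtain ⟨q, hq, hAq⟩ := hω
  obtain ⟨c, hc, hosc⟩ := hdecay.exists_abs_sub_le
  set γ : ℝ := n * q + 1
  have hγ : 0 < γ := by have := one_pos.trans hq; positivity
  intro s _
  set T := max s 1
  have hT : 0 < T := one_pos.trans_le (le_max_right s 1)
  set β : ℝ≥0 := min T⁻¹ (Real.exp (-(2 * c * γ))).toNNReal
  have hβ_exp : (β : ℝ) ≤ Real.exp (-(2 * c * γ)) :=
    (NNReal.coe_le_coe.mpr (min_le_right _ _)).trans (Real.coe_toNNReal _ (Real.exp_pos _).le).le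
  refine ⟨β, lt_min (inv_pos.mpr hT) (Real.toNNReal_pos.mpr (Real.exp_pos _)),
    (min_le_left _ _).trans (inv_le_one_of_one_le₀ (le_max_right s 1)), powDecay γ,
    ⟨measurable_powDecay γ, ne_top_of_le_ne_top (hAq.lintegral_powDecay_mul_ne_top hq)
      (setLIntegral_le_lintegral _ _), 1, ae_of_all _ fun x _ => powDecay_le_one hγ.le x⟩,
    ae_of_all _ fun x => ae_of_all _ fun y hx hy t hts => ?_⟩
  have htT : t ≤ T := by exact_mod_cast le_max_of_varExp_le (hp1 y hy) hts
  refine varExp_mul_le_add_powDecay hc hγ (hp1 x hx) (hp1 y hy)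
    ((le_abs_self _).trans (hosc x hx y hy)) hβ_exp ?_
  calc β * t ≤ T⁻¹ * T := mul_le_mul' (min_le_left _ _) htT
    _ = 1 := inv_mul_cancel₀ hT.ne'

/-- The variable exponent functional satisfies (A2)_ω. -/
theorem varExp_A2w
    (n : ℕ) (Ω : Set (Rn n)) (hΩ : IsOpen Ω)
    (ω : Rn n → ℝ≥0∞) (hω : MuckenhouptAinfty ω)
    (p : Rn n → ℝ≥0∞) (hpm : Measurable p) (hp1 : ∀ x ∈ Ω, 1 ≤ p x)
    (pinf : ℝ≥0∞) (hpinf : 1 ≤ pinf)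
    (hdecay : LogHolderDecay Ω (invExp p) ((pinf)⁻¹).toReal) :
    A2w Ω ω (varExp p) :=
  varExp_A2w_general n Ω ω hω p hp1 pinf hdecay
end
end

section
/- Let Ω ⊆ ℝⁿ be open, ω a weight, and φ(x,t) = t^p + a(x)t^q with 1 ≤ p < q < ∞ and a ∈ L^∞(Ω) nonnegative and measurable. Then φ satisfies (A1)_ω if and only if there exists a constant C > 0 such that a(x) ≤ C ( a(y) + ω(B)^{(q−p)/p} ) for every open ball B ⊆ ℝⁿ and a.e. x, y ∈ B∩Ω. -/
open MeasureTheory Metric Filter Set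
open scoped ENNReal NNReal Topology

noncomputable section

lemma wball_pos {n : ℕ} {ω : Rn n → ℝ≥0∞} (hw : IsWeight ω) (z : Rn n) (r : ℝ) (hr : 0 < r) :
    0 < wSet ω (ball z r) := by
  rcases hw with ⟨hm, hpos, -⟩
  rw [pos_iff_ne_zero]
  intro h0
  have h0' : ω =ᵐ[volume.restrict (ball z r)] 0 :=
    (lintegral_eq_zero_iff hm).mp h0
  have hpos' : ∀ᵐ x ∂(volume.restrict (ball z r)), 0 < ω x ∧ ω x < ∞ :=
    ae_restrict_of_ae hpos
  have hne : (volume.restrict (ball z r)) ≠ 0 := by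
    intro h
    have := measure_ball_pos (volume : Measure (Rn n)) z hr
    rw [← Measure.restrict_apply_self, h] at this
    simp at this
  have : (ae (volume.restrict (ball z r))).NeBot := ae_neBot.mpr hne
  obtain ⟨x, hx0, hxp⟩ := (h0'.and hpos').exists
  simp [hx0] at hxp

lemma doublePhase_eq {n : ℕ} (a : Rn n → ℝ) (p q : ℝ) (hp : 0 < p) (hq : 0 < q)
    (x : Rn n) (hax : 0 ≤ a x) (t : ℝ≥0) :
    doublePhase a p q x (t : ℝ≥0∞) = ENNReal.ofReal ((t:ℝ) ^ p + a x * (t:ℝ) ^ q) := by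
  have h1 : ((t : ℝ≥0∞)) = ENNReal.ofReal (t:ℝ) := (ENNReal.ofReal_coe_nnreal).symm
  rw [doublePhase, h1, ENNReal.ofReal_rpow_of_nonneg t.coe_nonneg hp.le,
    ENNReal.ofReal_rpow_of_nonneg t.coe_nonneg hq.le, ← ENNReal.ofReal_mul hax,
    ← ENNReal.ofReal_add (Real.rpow_nonneg t.coe_nonneg p)
      (mul_nonneg hax (Real.rpow_nonneg t.coe_nonneg q))]

lemma dp_forward_core (p q θ b w s t₀ ax ay : ℝ)
    (hp0 : 0 < p) (hpq : p < q) (hθdef : θ = (q - p) / p)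
    (hb0 : 0 < b) (hw0 : 0 < w) (hsdef : s = w⁻¹) (hs1 : 1 ≤ s)
    (ht₀pos : 0 < t₀) (hax0 : 0 ≤ ax) (hay0 : 0 ≤ ay)
    (hgts : t₀ ^ p + ay * t₀ ^ q = s)
    (hkey2 : ax * (b ^ q * t₀ ^ q) ≤ s) :
    ax ≤ (2 ^ (1 + θ) * b ^ (-q)) * (ay + w ^ θ) := by
  have hθ : 0 < θ := by rw [hθdef]; exact div_pos (by linarith) hp0
  have hK0 : 0 < 2 ^ (1 + θ) * b ^ (-q) :=
    mul_pos (Real.rpow_pos_of_pos two_pos _) (Real.rpow_pos_of_pos hb0 _)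
  have ht₀0 : 0 ≤ t₀ := ht₀pos.le
  have hPpos : 0 < t₀ ^ p := Real.rpow_pos_of_pos ht₀pos p
  have hRpos : 0 < t₀ ^ (q - p) := Real.rpow_pos_of_pos ht₀pos _
  have hQid : t₀ ^ q = t₀ ^ (q - p) * t₀ ^ p := by
    rw [← Real.rpow_add ht₀pos]; ring_nf
  have hbqpos : 0 < b ^ q := Real.rpow_pos_of_pos hb0 q
  have hwθ0 : 0 ≤ w ^ θ := Real.rpow_nonneg hw0.le θ
  have hs0 : 0 < s := lt_of_lt_of_le one_pos hs1
  by_cases hcase : ay * t₀ ^ (q - p) ≤ 1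
  · have hs2 : s ≤ 2 * t₀ ^ p := by
      rw [← hgts, hQid]; nlinarith
    have h2 : ax * b ^ q * t₀ ^ (q - p) ≤ 2 := by
      have heq : ax * (b ^ q * t₀ ^ q) = ax * b ^ q * t₀ ^ (q - p) * t₀ ^ p := by
        rw [hQid]; ring
      have h2' : ax * b ^ q * t₀ ^ (q - p) * t₀ ^ p ≤ 2 * t₀ ^ p := by
        rw [← heq]; linarith
      exact le_of_mul_le_mul_right h2' hPpos
    have hRP : t₀ ^ (q - p) = (t₀ ^ p) ^ θ := by
      rw [← Real.rpow_mul ht₀0]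
      congr 1
      rw [hθdef]; field_simp
    have hPge : s / 2 ≤ t₀ ^ p := by linarith
    have hRge : (s / 2) ^ θ ≤ t₀ ^ (q - p) := by
      rw [hRP]; exact Real.rpow_le_rpow (by positivity) hPge hθ.le
    have h3 : ax * (b ^ q * (s / 2) ^ θ) ≤ 2 := by
      have h4 : ax * b ^ q * (s / 2) ^ θ ≤ ax * b ^ q * t₀ ^ (q - p) :=
        mul_le_mul_of_nonneg_left hRge (by positivity)
      nlinarith
    have hid : (2 ^ (1 + θ) * b ^ (-q)) * w ^ θ * (b ^ q * (s / 2) ^ θ) = 2 := by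
      have h4 : b ^ (-q) * b ^ q = 1 := by
        rw [← Real.rpow_add hb0]; simp
      have h5 : w ^ θ * (s / 2) ^ θ = (1 / 2 : ℝ) ^ θ := by
        rw [← Real.mul_rpow hw0.le (by positivity)]
        congr 1
        rw [hsdef]; field_simp
      have h6 : (2 : ℝ) ^ (1 + θ) * (1 / 2 : ℝ) ^ θ = 2 := by
        rw [Real.rpow_add two_pos, Real.rpow_one, one_div,
          Real.inv_rpow (by norm_num : (0:ℝ) ≤ 2)]
        field_simp [ne_of_gt (Real.rpow_pos_of_pos two_pos θ)]
      have h7 : (2 ^ (1 + θ) * b ^ (-q)) * w ^ θ * (b ^ q * (s / 2) ^ θ)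
          = (2 : ℝ) ^ (1 + θ) * (b ^ (-q) * b ^ q) * (w ^ θ * (s / 2) ^ θ) := by ring
      rw [h7, h4, h5, mul_one, h6]
    have hpos2 : 0 < b ^ q * (s / 2) ^ θ := by positivity
    have h8 : ax * (b ^ q * (s / 2) ^ θ)
        ≤ ((2 ^ (1 + θ) * b ^ (-q)) * w ^ θ) * (b ^ q * (s / 2) ^ θ) := by
      linarith
    have haxK : ax ≤ (2 ^ (1 + θ) * b ^ (-q)) * w ^ θ := le_of_mul_le_mul_right h8 hpos2
    nlinarith [mul_nonneg hK0.le hay0]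
  · push_neg at hcase
    have htqpos : 0 < t₀ ^ q := Real.rpow_pos_of_pos ht₀pos q
    have hs2 : s ≤ 2 * (ay * t₀ ^ q) := by
      rw [← hgts]
      have : t₀ ^ p ≤ ay * t₀ ^ q := by
        rw [hQid]; nlinarith
      linarith
    have h2 : ax * b ^ q ≤ 2 * ay := by
      have h2' : (ax * b ^ q) * t₀ ^ q ≤ (2 * ay) * t₀ ^ q := by nlinarith
      exact le_of_mul_le_mul_right h2' htqpos
    have hbneg : 0 < b ^ (-q) := Real.rpow_pos_of_pos hb0 _
    have h4 : b ^ q * b ^ (-q) = 1 := by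
      rw [← Real.rpow_add hb0]; simp
    have h8 : ax ≤ 2 * ay * b ^ (-q) := by
      have h5 := mul_le_mul_of_nonneg_right h2 hbneg.le
      calc ax = ax * (b ^ q * b ^ (-q)) := by rw [h4]; ring
        _ = (ax * b ^ q) * b ^ (-q) := by ring
        _ ≤ (2 * ay) * b ^ (-q) := h5
        _ = 2 * ay * b ^ (-q) := by ring
    have h7 : (2 : ℝ) ^ (1 : ℝ) ≤ 2 ^ (1 + θ) :=
      Real.rpow_le_rpow_of_exponent_le one_le_two (by linarith)
    have h9 : 2 * b ^ (-q) ≤ 2 ^ (1 + θ) * b ^ (-q) := by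
      have h10 := mul_le_mul_of_nonneg_right h7 hbneg.le
      rw [Real.rpow_one] at h10
      exact h10
    nlinarith [mul_le_mul_of_nonneg_right h9 hay0, mul_nonneg hK0.le hwθ0]

lemma dp_reverse_core (p q θ b w C t' ax ay : ℝ)
    (hp0 : 0 < p) (hpq : p < q) (hθdef : θ = (q - p) / p)
    (hb0 : 0 < b) (hw0 : 0 < w) (hC : 0 < C)
    (hbp : b ^ p ≤ 1 / 2) (hbq : C * b ^ q ≤ 1 / 2)
    (ht0' : 0 < t') (hay0 : 0 ≤ ay)
    (hax : ax ≤ C * (ay + w ^ θ))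
    (h2' : t' ^ p + ay * t' ^ q ≤ w⁻¹) :
    (b * t') ^ p + ax * (b * t') ^ q ≤ t' ^ p + ay * t' ^ q := by
  have hθ : 0 < θ := by rw [hθdef]; exact div_pos (by linarith) hp0
  have ht'0 : 0 ≤ t' := ht0'.le
  have hQ0 : 0 ≤ t' ^ q := Real.rpow_nonneg ht'0 q
  have hP0 : 0 ≤ t' ^ p := Real.rpow_nonneg ht'0 p
  have hR0 : 0 ≤ t' ^ (q - p) := Real.rpow_nonneg ht'0 _
  have htp : t' ^ p ≤ w⁻¹ := by nlinarith [mul_nonneg hay0 hQ0]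
  have hwt : w ^ θ * t' ^ (q - p) ≤ 1 := by
    have e : t' ^ (q - p) = (t' ^ p) ^ θ := by
      rw [← Real.rpow_mul ht'0]
      congr 1
      rw [hθdef]; field_simp
    rw [e]
    have hmono : (t' ^ p) ^ θ ≤ (w⁻¹) ^ θ := Real.rpow_le_rpow hP0 htp hθ.le
    have e2 : (w⁻¹) ^ θ = (w ^ θ)⁻¹ := Real.inv_rpow hw0.le θ
    calc w ^ θ * (t' ^ p) ^ θ ≤ w ^ θ * (w ^ θ)⁻¹ :=
          mul_le_mul_of_nonneg_left (e2 ▸ hmono) (Real.rpow_nonneg hw0.le θ)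
      _ = 1 := mul_inv_cancel₀ (ne_of_gt (Real.rpow_pos_of_pos hw0 θ))
  have e1 : (b * t') ^ p = b ^ p * t' ^ p := Real.mul_rpow hb0.le ht'0
  have e2 : (b * t') ^ q = b ^ q * t' ^ q := Real.mul_rpow hb0.le ht'0
  have e3 : t' ^ q = t' ^ (q - p) * t' ^ p := by
    rw [← Real.rpow_add ht0']; ring_nf
  have hbqn : 0 ≤ b ^ q := Real.rpow_nonneg hb0.le q
  have f0 : ax * (b ^ q * t' ^ q) ≤ (C * (ay + w ^ θ)) * (b ^ q * t' ^ q) :=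
    mul_le_mul_of_nonneg_right hax (mul_nonneg hbqn hQ0)
  have f1 : (C * b ^ q) * ay ≤ (1 / 2) * ay := mul_le_mul_of_nonneg_right hbq hay0
  have f2 : (C * b ^ q) * (w ^ θ * t' ^ (q - p)) ≤ 1 / 2 := by
    calc (C * b ^ q) * (w ^ θ * t' ^ (q - p)) ≤ (C * b ^ q) * 1 :=
          mul_le_mul_of_nonneg_left hwt (by positivity)
      _ ≤ 1 / 2 := by rw [mul_one]; exact hbq
  have f3 : b ^ p * t' ^ p ≤ (1 / 2) * t' ^ p := mul_le_mul_of_nonneg_right hbp hP0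
  have g1 : (C * (ay + w ^ θ)) * (b ^ q * t' ^ q)
      = ((C * b ^ q) * ay) * t' ^ q + ((C * b ^ q) * (w ^ θ * t' ^ (q - p))) * t' ^ p := by
    rw [e3]; ring
  have g2 : ((C * b ^ q) * (w ^ θ * t' ^ (q - p))) * t' ^ p ≤ (1 / 2) * t' ^ p :=
    mul_le_mul_of_nonneg_right f2 hP0
  have g3 : ((C * b ^ q) * ay) * t' ^ q ≤ ((1 / 2) * ay) * t' ^ q :=
    mul_le_mul_of_nonneg_right f1 hQ0
  have g4 : 0 ≤ ay * t' ^ q := mul_nonneg hay0 hQ0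
  rw [e1, e2]
  nlinarith [f0, f3, g1, g2, g3, g4]

lemma dp_trivial (K Ca Cm ax ay wθ : ℝ) (h1 : ax ≤ Ca) (hwθ1 : 1 ≤ wθ)
    (hC1 : 1 ≤ Cm) (hCa' : Ca ≤ Cm) (hK : K ≤ Cm → True) (hay0 : 0 ≤ ay) :
    ax ≤ Cm * (ay + wθ) := by
  have h0 : (0:ℝ) ≤ Cm := by linarith
  nlinarith [mul_le_mul_of_nonneg_left hwθ1 h0, mul_le_mul_of_nonneg_left hay0 h0]

lemma dp_upgrade (K Cm ax ay wθ : ℝ) (h : ax ≤ K * (ay + wθ)) (hKC : K ≤ Cm)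
    (hay0 : 0 ≤ ay) (hwθ0 : 0 ≤ wθ) :
    ax ≤ Cm * (ay + wθ) := by
  nlinarith [mul_le_mul_of_nonneg_right hKC (by linarith : (0:ℝ) ≤ ay + wθ)]

set_option maxHeartbeats 1000000 in
/-- Characterization of (A1)_ω for the double phase functional. -/
theorem doublePhase_A1w_iff
    (n : ℕ) (Ω : Set (Rn n)) (hΩ : IsOpen Ω)
    (ω : Rn n → ℝ≥0∞) (hw : IsWeight ω)
    (p q : ℝ) (hp : 1 ≤ p) (hpq : p < q)
    (a : Rn n → ℝ) (ham : Measurable a) (ha0 : ∀ x ∈ Ω, 0 ≤ a x)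
    (hainf : ∃ C : ℝ, ∀ x ∈ Ω, a x ≤ C) :
    A1w Ω ω (doublePhase a p q) ↔
      ∃ C : ℝ, 0 < C ∧ ∀ (z : Rn n) (r : ℝ), 0 < r →
        ∀ᵐ x ∂(volume : Measure (Rn n)), ∀ᵐ y ∂(volume : Measure (Rn n)),
          x ∈ ball z r ∩ Ω → y ∈ ball z r ∩ Ω →
            a x ≤ C * (a y + (wSet ω (ball z r)).toReal ^ ((q - p) / p)) := by
  have hp0 : (0:ℝ) < p := lt_of_lt_of_le zero_lt_one hp
  have hq0 : (0:ℝ) < q := hp0.trans hpq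
  have hqp' : (0:ℝ) < q - p := sub_pos.mpr hpq
  set θ : ℝ := (q - p) / p with hθdef
  have hθ : 0 < θ := div_pos hqp' hp0
  constructor
  · rintro ⟨β₁, hβ0, hβ1, hA⟩
    obtain ⟨Ca, hCa⟩ := hainf
    have hb0 : (0:ℝ) < (β₁ : ℝ) := hβ0
    set K : ℝ := 2 ^ (1 + θ) * (β₁ : ℝ) ^ (-q) with hKdef
    have hK0 : 0 < K := mul_pos (Real.rpow_pos_of_pos two_pos _) (Real.rpow_pos_of_pos hb0 _)
    refine ⟨max K (max Ca 1),
      lt_of_lt_of_le one_pos (le_trans (le_max_right _ _) (le_max_right _ _)), ?_⟩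
    intro z r hr
    have hWfin : wSet ω (ball z r) ≠ ∞ := hw.2.2 z r hr
    have hW0 : 0 < wSet ω (ball z r) := wball_pos hw z r hr
    set w : ℝ := (wSet ω (ball z r)).toReal with hwdef
    have hw0 : 0 < w := ENNReal.toReal_pos hW0.ne' hWfin
    have hwθ0 : 0 ≤ w ^ θ := Real.rpow_nonneg hw0.le θ
    by_cases hωB : wSet ω (ball z r) ≤ 1
    · have hw1 : w ≤ 1 := by
        have := ENNReal.toReal_mono (a := wSet ω (ball z r)) (by norm_num) hωB
        simpa using this
      set s : ℝ := w⁻¹ with hsdef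
      have hs0 : 0 < s := inv_pos.mpr hw0
      have hs1 : 1 ≤ s := (one_le_inv₀ hw0).mpr hw1
      filter_upwards [hA z r hr hωB] with x hx
      filter_upwards [hx] with y hxy
      intro hxB hyB
      have hax0 : 0 ≤ a x := ha0 x hxB.2
      have hay0 : 0 ≤ a y := ha0 y hyB.2
      -- solve t₀^p + a y t₀^q = s by the intermediate value theorem
      set M : ℝ := s ^ (1/p) with hMdef
      have hM0 : 0 ≤ M := Real.rpow_nonneg hs0.le _
      have hMp : M ^ p = s := by
        rw [hMdef, ← Real.rpow_mul hs0.le, one_div, inv_mul_cancel₀ hp0.ne', Real.rpow_one]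
      have hgc : ContinuousOn (fun u : ℝ => u ^ p + a y * u ^ q) (Icc 0 M) := by
        apply ContinuousOn.add
        · exact (continuous_iff_continuousAt.mpr
            (fun u => Real.continuousAt_rpow_const u p (Or.inr hp0.le))).continuousOn
        · exact (continuous_const.mul (continuous_iff_continuousAt.mpr
            (fun u => Real.continuousAt_rpow_const u q (Or.inr hq0.le)))).continuousOn
      have hg0 : (0:ℝ) ^ p + a y * (0:ℝ) ^ q = 0 := by
        simp [Real.zero_rpow hp0.ne', Real.zero_rpow hq0.ne']
      have hgM : s ≤ M ^ p + a y * M ^ q := by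
        have h1 : 0 ≤ a y * M ^ q := mul_nonneg hay0 (Real.rpow_nonneg hM0 q)
        rw [hMp]; linarith
      obtain ⟨t₀, ht₀mem, hgt₀⟩ := intermediate_value_Icc hM0 hgc
        ⟨by rw [hg0]; exact hs0.le, hgM⟩
      have ht₀0 : 0 ≤ t₀ := ht₀mem.1
      have hgts : t₀ ^ p + a y * t₀ ^ q = s := hgt₀
      have ht₀pos : 0 < t₀ := by
        rcases ht₀0.lt_or_eq with h | h
        · exact h
        · exfalso; rw [← h, hg0] at hgts; linarith
      set t : ℝ≥0 := ⟨t₀, ht₀0⟩ with htdef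
      have hty : doublePhase a p q y (t : ℝ≥0∞) = ENNReal.ofReal s := by
        rw [doublePhase_eq a p q hp0 hq0 y hay0 t]
        exact congrArg _ hgts
      have hWinv_fin : (wSet ω (ball z r))⁻¹ ≠ ∞ := ENNReal.inv_ne_top.mpr hW0.ne'
      have hsW : ENNReal.ofReal s = (wSet ω (ball z r))⁻¹ := by
        rw [hsdef, hwdef, ← ENNReal.toReal_inv, ENNReal.ofReal_toReal hWinv_fin]
      have key := hxy hxB hyB t (by rw [hty]; exact ENNReal.one_le_ofReal.mpr hs1)
        (by rw [hty, hsW])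
      rw [hty, ← ENNReal.coe_mul, doublePhase_eq a p q hp0 hq0 x hax0 (β₁ * t)] at key
      have hcoe : ((β₁ * t : ℝ≥0) : ℝ) = (β₁ : ℝ) * t₀ := rfl
      rw [hcoe] at key
      have hreal : ((β₁:ℝ) * t₀) ^ p + a x * ((β₁:ℝ) * t₀) ^ q ≤ s :=
        (ENNReal.ofReal_le_ofReal_iff hs0.le).mp key
      have ebq : ((β₁:ℝ) * t₀) ^ q = (β₁:ℝ) ^ q * t₀ ^ q := Real.mul_rpow hb0.le ht₀0
      have hbtp : 0 ≤ ((β₁:ℝ) * t₀) ^ p := Real.rpow_nonneg (mul_nonneg hb0.le ht₀0) p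
      have hkey2 : a x * ((β₁:ℝ) ^ q * t₀ ^ q) ≤ s := by
        rw [ebq] at hreal; nlinarith
      have hgoal : a x ≤ K * (a y + w ^ θ) :=
        dp_forward_core p q θ (β₁:ℝ) w s t₀ (a x) (a y) hp0 hpq hθdef hb0 hw0 hsdef hs1
          ht₀pos hax0 hay0 hgts hkey2
      exact dp_upgrade K (max K (max Ca 1)) (a x) (a y) (w ^ θ) hgoal
        (le_max_left _ _) hay0 hwθ0
    · push_neg at hωB
      refine Eventually.of_forall fun x => Eventually.of_forall fun y hxB hyB => ?_
      have hw1 : 1 ≤ w := by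
        have := ENNReal.toReal_mono hWfin hωB.le
        simpa using this
      exact dp_trivial K Ca (max K (max Ca 1)) (a x) (a y) (w ^ θ) (hCa x hxB.2)
        (Real.one_le_rpow hw1 hθ.le)
        (le_trans (le_max_right _ _) (le_max_right _ _))
        (le_trans (le_max_left _ _) (le_max_right _ _)) (fun _ => trivial) (ha0 y hyB.2)
  · rintro ⟨C, hC, hcond⟩
    set b : ℝ := min 1 (min ((1/2:ℝ) ^ (1/p)) ((1/(2*C)) ^ (1/q))) with hbdef
    have hb0 : 0 < b := lt_min one_pos (lt_min (Real.rpow_pos_of_pos (by norm_num) _)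
      (Real.rpow_pos_of_pos (by positivity) _))
    have hb1 : b ≤ 1 := min_le_left _ _
    have hbp : b ^ p ≤ 1/2 := by
      have h : b ≤ (1/2:ℝ) ^ (1/p) := le_trans (min_le_right (1:ℝ) _) (min_le_left _ _)
      calc b ^ p ≤ ((1/2:ℝ) ^ (1/p)) ^ p := Real.rpow_le_rpow hb0.le h hp0.le
        _ = 1/2 := by
          rw [← Real.rpow_mul (by norm_num), one_div p, inv_mul_cancel₀ hp0.ne',
            Real.rpow_one]
    have hbq : C * b ^ q ≤ 1/2 := by
      have h : b ≤ (1/(2*C)) ^ (1/q) := le_trans (min_le_right (1:ℝ) _) (min_le_right _ _)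
      have h2 : b ^ q ≤ 1/(2*C) := by
        calc b ^ q ≤ ((1/(2*C)) ^ (1/q)) ^ q := Real.rpow_le_rpow hb0.le h hq0.le
          _ = 1/(2*C) := by
            rw [← Real.rpow_mul (by positivity), one_div q, inv_mul_cancel₀ hq0.ne',
              Real.rpow_one]
      calc C * b ^ q ≤ C * (1/(2*C)) := mul_le_mul_of_nonneg_left h2 hC.le
        _ = 1/2 := by field_simp
    refine ⟨b.toNNReal, Real.toNNReal_pos.mpr hb0, ?_, ?_⟩
    · have := Real.toNNReal_mono hb1
      simpa using this
    · intro z r hr hωB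
      have hWfin : wSet ω (ball z r) ≠ ∞ := hw.2.2 z r hr
      have hW0 : 0 < wSet ω (ball z r) := wball_pos hw z r hr
      set w : ℝ := (wSet ω (ball z r)).toReal with hwdef
      have hw0 : 0 < w := ENNReal.toReal_pos hW0.ne' hWfin
      filter_upwards [hcond z r hr] with x hx
      filter_upwards [hx] with y hxy
      intro hxB hyB t h1 h2
      have hax := hxy hxB hyB
      have hax0 : 0 ≤ a x := ha0 x hxB.2
      have hay0 : 0 ≤ a y := ha0 y hyB.2
      have hβt : ((b.toNNReal * t : ℝ≥0) : ℝ) = b * (t:ℝ) := by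
        push_cast
        rw [Real.coe_toNNReal _ hb0.le]
      rw [← ENNReal.coe_mul, doublePhase_eq a p q hp0 hq0 x hax0 (b.toNNReal * t),
        doublePhase_eq a p q hp0 hq0 y hay0 t, hβt]
      apply ENNReal.ofReal_le_ofReal
      by_cases ht0 : (t:ℝ) = 0
      · rw [ht0]
        simp [Real.zero_rpow hp0.ne', Real.zero_rpow hq0.ne']
      · have ht0' : 0 < (t:ℝ) := lt_of_le_of_ne t.coe_nonneg (Ne.symm ht0)
        have h2' : (t:ℝ) ^ p + a y * (t:ℝ) ^ q ≤ w⁻¹ := by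
          rw [doublePhase_eq a p q hp0 hq0 y hay0 t] at h2
          have hWinv_fin : (wSet ω (ball z r))⁻¹ ≠ ∞ := ENNReal.inv_ne_top.mpr hW0.ne'
          have := (ENNReal.ofReal_le_iff_le_toReal hWinv_fin).mp h2
          rwa [ENNReal.toReal_inv] at this
        exact dp_reverse_core p q θ b w C (t:ℝ) (a x) (a y) hp0 hpq hθdef hb0 hw0 hC
          hbp hbq ht0' hay0 hax h2'
end
end

section
/- Let Ω ⊆ ℝⁿ be open, let φ ∈ Φ_w(Ω) satisfy (A0), (A1)_ω and (aInc)_p with p ∈ (1,∞), and let ω ∈ A_p. Then there exists β > 0 such that for every open ball B, a.e. x ∈ B∩Ω, and every measurable f ≥ 0 with ρ_φ^ω(f) ≤ 1 and f(y) ∈ {0} ∪ (1/β₀, ∞) for a.e. y (where β₀ is the constant from (A0)), one has φ(x, (β/|B|)∫_{B∩Ω} f dy)^{1/p} ≤ (2/|B|) ∫_{B∩Ω} φ(y, f(y))^{1/p} dy. -/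
open MeasureTheory Metric Filter Set
open scoped ENNReal NNReal Topology

noncomputable section

/-!
Write `s = β |B|⁻¹ ∫_{B∩Ω} f`, `M = |B|⁻¹ ∫_{B∩Ω} φ(·,f)^{1/p}` and `κ = a^{1/p}/β₀`. Since `f`
vanishes or exceeds `1/β₀`, where `φ ≥ 1`, `(aInc)_p` gives `f ≤ κ φ(·,f)^{1/p}`, so `s ≤ βκM`.

If `s < β₀`, then `(aInc)_p` on `[s, β₀]` and `φ(x,β₀) ≤ 1` give `φ(x,s)^{1/p} ≤ κs ≤ βκ²M ≤ M`.

If `s ≥ β₀`, then `M ≥ Λ` for small `β`, while Hölder's inequality and the `A_p` condition give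
`ω(B) M^p ≤ Λ^p ρ(f) ≤ Λ^p`. So the level `m = M/Λ ≥ 1` has `m^p ≤ 1/ω(B)`, in particular
`ω(B) ≤ 1`, and `(A1)_ω` applies on `B`. Suppose `φ(x,s) > m^p`. Every `t > S = 1/β₀ + s/β₁`
then has `φ(y,t) > m^p`, as otherwise `φ(x,s) ≤ φ(x,β₁t) ≤ φ(y,t) ≤ m^p`; so `(aInc)_p` on
`[2S, f(y)]` gives `f(y) m ≤ S m + 2a^{1/p} S φ(y,f(y))^{1/p}`. Averaging over `B ∩ Ω` yields
`s/β ≤ (1 + 2a^{1/p}Λ) S ≤ (1 + 2a^{1/p}Λ)(β₀⁻² + β₁⁻¹) s`, impossible for small `β`.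
Hence `φ(x,s)^{1/p} ≤ m ≤ M`.
-/

/-- The hypotheses on `φ(x, ·)` at a single point `x`: a weak Φ-function with `φ(x,∞) = ∞`,
satisfying `(aInc)_p` with constant `a` and `(A0)` with constant `β₀`. -/
structure IsNormalizedPhi (ψ : ℝ≥0∞ → ℝ≥0∞) (p : ℝ) (a β₀ : ℝ≥0) : Prop where
  mono : Monotone ψ
  map_zero : ψ 0 = 0
  map_top : ψ ⊤ = ⊤
  one_le_const : 1 ≤ a
  aInc : ∀ s t : ℝ≥0, 0 < s → s < t → ψ s / (s : ℝ≥0∞) ^ p ≤ a * (ψ t / (t : ℝ≥0∞) ^ p)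
  apply_le_one : ψ β₀ ≤ 1
  one_le_apply : 1 ≤ ψ (β₀ : ℝ≥0∞)⁻¹

namespace IsNormalizedPhi

variable {ψ : ℝ≥0∞ → ℝ≥0∞} {p : ℝ} {a β₀ : ℝ≥0}

theorem apply_mul_rpow_le (h : IsNormalizedPhi ψ p a β₀) (hp : 0 < p) {s t : ℝ≥0∞}
    (hs : 0 < s) (hst : s < t) : ψ s * t ^ p ≤ a * s ^ p * ψ t := by
  have ha : (a : ℝ≥0∞) ≠ 0 := by exact_mod_cast (zero_lt_one.trans_le h.one_le_const).ne'
  have hs' : s ^ p ≠ 0 := by simp [ENNReal.rpow_eq_zero_iff, hs.ne', hp, hp.le]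
  rcases eq_or_ne t ⊤ with rfl | ht
  · simp [h.map_top, ENNReal.mul_top (mul_ne_zero ha hs')]
  lift t to ℝ≥0 using ht
  lift s to ℝ≥0 using (hst.trans_le le_top).ne
  have hsp : (s : ℝ≥0∞) ^ p ≠ ⊤ := ENNReal.rpow_ne_top_of_nonneg hp.le ENNReal.coe_ne_top
  have htp : (t : ℝ≥0∞) ^ p ≠ ⊤ := ENNReal.rpow_ne_top_of_nonneg hp.le ENNReal.coe_ne_top
  have htp' : (t : ℝ≥0∞) ^ p ≠ 0 := by
    simp [ENNReal.rpow_eq_zero_iff, (hs.trans hst).ne', hp]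
  have hinc := h.aInc s t (by exact_mod_cast hs) (by exact_mod_cast hst)
  calc ψ s * t ^ p ≤ a * (ψ t / t ^ p) * s ^ p * t ^ p := by
        gcongr; exact (ENNReal.div_le_iff hs' hsp).1 hinc
    _ = a * s ^ p * (ψ t / t ^ p * t ^ p) := by ring
    _ = a * s ^ p * ψ t := by rw [ENNReal.div_mul_cancel htp' htp]

theorem rpow_one_div_apply_le (h : IsNormalizedPhi ψ p a β₀) (hp : 0 < p) {s : ℝ≥0∞}
    (hs : s < β₀) : ψ s ^ (1 / p) ≤ (a : ℝ≥0∞) ^ (1 / p) / β₀ * s := by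
  rw [one_div, ENNReal.rpow_inv_le_iff hp, ENNReal.mul_rpow_of_nonneg _ _ hp.le,
    ENNReal.div_rpow_of_nonneg _ _ hp.le, ENNReal.rpow_inv_rpow hp.ne']
  rcases eq_or_ne s 0 with rfl | hs0
  · simp [h.map_zero]
  have hβ₀ : (β₀ : ℝ≥0∞) ^ p ≠ 0 := by
    simp [ENNReal.rpow_eq_zero_iff, (zero_le.trans_lt hs).ne', hp]
  rw [show (a : ℝ≥0∞) / β₀ ^ p * s ^ p = a * s ^ p / β₀ ^ p by simp only [div_eq_mul_inv]; ring,
    ENNReal.le_div_iff_mul_le (Or.inl hβ₀)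
    (Or.inl (ENNReal.rpow_ne_top_of_nonneg hp.le ENNReal.coe_ne_top))]
  calc ψ s * β₀ ^ p ≤ a * s ^ p * ψ β₀ := h.apply_mul_rpow_le hp (pos_iff_ne_zero.2 hs0) hs
    _ ≤ a * s ^ p := mul_le_of_le_one_right' h.apply_le_one

theorem le_mul_rpow_one_div_apply (h : IsNormalizedPhi ψ p a β₀) (hp : 0 < p) {t : ℝ≥0∞}
    (ht : (β₀ : ℝ≥0∞)⁻¹ < t) : t ≤ (a : ℝ≥0∞) ^ (1 / p) / β₀ * ψ t ^ (1 / p) := by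
  rw [← ENNReal.rpow_le_rpow_iff hp, ENNReal.mul_rpow_of_nonneg _ _ hp.le,
    ENNReal.div_rpow_of_nonneg _ _ hp.le, one_div, ENNReal.rpow_inv_rpow hp.ne',
    ENNReal.rpow_inv_rpow hp.ne', div_eq_mul_inv, ← ENNReal.inv_rpow]
  calc t ^ p ≤ ψ (β₀ : ℝ≥0∞)⁻¹ * t ^ p := le_mul_of_one_le_left' h.one_le_apply
    _ ≤ a * (β₀ : ℝ≥0∞)⁻¹ ^ p * ψ t :=
      h.apply_mul_rpow_le hp (ENNReal.inv_pos.2 ENNReal.coe_ne_top) ht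

theorem mul_le_of_rpow_le_apply (h : IsNormalizedPhi ψ p a β₀) (hp : 0 < p) {m u t : ℝ≥0∞}
    (hu : 0 < u) (hmu : m ^ p ≤ ψ u) (hmt : m ^ p ≤ ψ t) :
    t * m ≤ (a : ℝ≥0∞) ^ (1 / p) * u * ψ t ^ (1 / p) := by
  rw [← ENNReal.rpow_le_rpow_iff hp, ENNReal.mul_rpow_of_nonneg _ _ hp.le,
    ENNReal.mul_rpow_of_nonneg _ _ hp.le, ENNReal.mul_rpow_of_nonneg _ _ hp.le, one_div,
    ENNReal.rpow_inv_rpow hp.ne', ENNReal.rpow_inv_rpow hp.ne']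
  rcases le_or_gt t u with htu | hut
  · calc t ^ p * m ^ p ≤ u ^ p * ψ t := by gcongr
      _ ≤ a * u ^ p * ψ t := by
        rw [mul_assoc]; exact le_mul_of_one_le_left' (by exact_mod_cast h.one_le_const)
  · calc t ^ p * m ^ p ≤ ψ u * t ^ p := by rw [mul_comm]; gcongr
      _ ≤ a * u ^ p * ψ t := h.apply_mul_rpow_le hp hu hut

section Transfer

variable {χ : ℝ≥0∞ → ℝ≥0∞} {β₁ : ℝ≥0} {s S : ℝ≥0∞}

theorem lt_apply_of_transfer (h : IsNormalizedPhi ψ p a β₀) (hχ : Monotone χ) {τ : ℝ≥0∞}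
    (hS : (β₀ : ℝ≥0∞)⁻¹ ≤ S) (hsS : s ≤ β₁ * S) (hτs : τ < χ s)
    (htransfer : ∀ t : ℝ≥0, 1 ≤ ψ t → ψ t ≤ τ → χ (β₁ * t) ≤ ψ t) {t : ℝ≥0∞} (hSt : S < t) :
    τ < ψ t := by
  by_contra! hle
  have hτ : τ ≠ ⊤ := (hτs.trans_le le_top).ne
  lift t to ℝ≥0 using fun ht => hτ (top_le_iff.1 (by simpa [ht, h.map_top] using hle))
  have hone : 1 ≤ ψ t := h.one_le_apply.trans (h.mono (hS.trans hSt.le))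
  have hχs : χ s ≤ χ (β₁ * t) := hχ (hsS.trans (by gcongr))
  exact hτs.not_ge (hχs.trans ((htransfer t hone hle).trans hle))

theorem mul_le_of_transfer (h : IsNormalizedPhi ψ p a β₀) (hp : 0 < p) (hχ : Monotone χ)
    {m : ℝ≥0∞} (hS : (β₀ : ℝ≥0∞)⁻¹ ≤ S) (hS' : S ≠ ⊤) (hsS : s ≤ β₁ * S) (hms : m ^ p < χ s)
    (htransfer : ∀ t : ℝ≥0, 1 ≤ ψ t → ψ t ≤ m ^ p → χ (β₁ * t) ≤ ψ t) (t : ℝ≥0∞) :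
    t * m ≤ S * m + 2 * (a : ℝ≥0∞) ^ (1 / p) * S * ψ t ^ (1 / p) := by
  rcases le_or_gt t S with htS | hSt
  · exact le_add_right (by gcongr)
  have hS0 : 0 < S := (ENNReal.inv_pos.2 ENNReal.coe_ne_top).trans_le hS
  have h2S : S < 2 * S := by
    rw [two_mul]; exact ENNReal.lt_add_right hS' hS0.ne'
  have hlt {u : ℝ≥0∞} (hu : S < u) : m ^ p < ψ u :=
    h.lt_apply_of_transfer hχ hS hsS hms htransfer hu
  calc t * m ≤ (a : ℝ≥0∞) ^ (1 / p) * (2 * S) * ψ t ^ (1 / p) :=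
        h.mul_le_of_rpow_le_apply hp (hS0.trans h2S) (hlt h2S).le (hlt hSt).le
    _ = 2 * (a : ℝ≥0∞) ^ (1 / p) * S * ψ t ^ (1 / p) := by ring
    _ ≤ _ := le_add_self

end Transfer

end IsNormalizedPhi

theorem lintegral_rpow_le_lintegral_rpow_mul_weight {α : Type*} [MeasurableSpace α]
    {μ : Measure α} {p : ℝ} (hp : 1 < p) {g w : α → ℝ≥0∞} (hg : AEMeasurable g μ)
    (hw : AEMeasurable w μ) (hw' : ∀ᵐ x ∂μ, w x ≠ 0 ∧ w x ≠ ⊤) :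
    (∫⁻ x, g x ∂μ) ^ p ≤
      (∫⁻ x, g x ^ p * w x ∂μ) * (∫⁻ x, w x ^ (-(1 / (p - 1))) ∂μ) ^ (p - 1) := by
  have hp0 : 0 < p := by linarith
  have hp1 : p - 1 ≠ 0 := by linarith
  have hg_eq : ∫⁻ x, (g x * w x ^ (1 / p)) * w x ^ (-(1 / p)) ∂μ = ∫⁻ x, g x ∂μ := by
    refine lintegral_congr_ae ?_
    filter_upwards [hw'] with x hx
    rw [mul_assoc, ← ENNReal.rpow_add _ _ hx.1 hx.2, add_neg_cancel, ENNReal.rpow_zero, mul_one]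
  have hF (x : α) : (g x * w x ^ (1 / p)) ^ p = g x ^ p * w x := by
    rw [ENNReal.mul_rpow_of_nonneg _ _ hp0.le, ← ENNReal.rpow_mul, one_div_mul_cancel hp0.ne',
      ENNReal.rpow_one]
  have hG (x : α) : (w x ^ (-(1 / p))) ^ p.conjExponent = w x ^ (-(1 / (p - 1))) := by
    rw [← ENNReal.rpow_mul, Real.conjExponent]; congr 1; field_simp
  have holder := ENNReal.lintegral_mul_le_Lp_mul_Lq μ (Real.HolderConjugate.conjExponent hp)
    (hg.mul (hw.pow_const (1 / p))) (hw.pow_const (-(1 / p)))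
  simp only [Pi.mul_apply, hF, hG, hg_eq] at holder
  calc (∫⁻ x, g x ∂μ) ^ p
      ≤ ((∫⁻ x, g x ^ p * w x ∂μ) ^ (1 / p) *
          (∫⁻ x, w x ^ (-(1 / (p - 1))) ∂μ) ^ (1 / p.conjExponent)) ^ p := by gcongr
    _ = _ := by
      rw [ENNReal.mul_rpow_of_nonneg _ _ hp0.le, ← ENNReal.rpow_mul, ← ENNReal.rpow_mul,
        one_div_mul_cancel hp0.ne', ENNReal.rpow_one]
      rw [Real.conjExponent]; congr 2; field_simp

theorem MuckenhouptAq.exists_wSet_mul_average_rpow_le {n : ℕ} {p : ℝ} {ω : Rn n → ℝ≥0∞}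
    (hω : MuckenhouptAq p ω) (hp : 1 < p) :
    ∃ Λ : ℝ≥0, 1 ≤ Λ ∧ ∀ (z : Rn n) (r : ℝ), 0 < r → ∀ A ⊆ ball z r, ∀ g : Rn n → ℝ≥0∞,
      AEMeasurable g (volume.restrict A) →
        wSet ω (ball z r) * ((volume (ball z r))⁻¹ * ∫⁻ y in A, g y) ^ p ≤
          (Λ : ℝ≥0∞) ^ p * ∫⁻ y in A, g y ^ p * ω y := by
  obtain ⟨⟨hωm, hωae, -⟩, C, hC, hCB⟩ := hω
  have hp0 : 0 < p := by linarith
  refine ⟨(C.toNNReal + 1) ^ (1 / p), NNReal.one_le_rpow le_add_self (by positivity),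
    fun z r hr A hA g hg => ?_⟩
  have hσ : (∫⁻ y in A, ω y ^ (-(1 / (p - 1)))) ^ (p - 1) ≤
      (∫⁻ y in ball z r, ω y ^ (-(1 / (p - 1)))) ^ (p - 1) :=
    ENNReal.rpow_le_rpow (lintegral_mono_set hA) (by linarith)
  have holder := lintegral_rpow_le_lintegral_rpow_mul_weight hp hg hωm.aemeasurable
    (ae_restrict_of_ae (hωae.mono fun _ hx => ⟨hx.1.ne', hx.2.ne⟩))
  calc wSet ω (ball z r) * ((volume (ball z r))⁻¹ * ∫⁻ y in A, g y) ^ p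
      = volume (ball z r) ^ (-p) * wSet ω (ball z r) * (∫⁻ y in A, g y) ^ p := by
        rw [ENNReal.mul_rpow_of_nonneg _ _ hp0.le, ENNReal.inv_rpow, ← ENNReal.rpow_neg]; ring
    _ ≤ volume (ball z r) ^ (-p) * wSet ω (ball z r) * ((∫⁻ y in A, g y ^ p * ω y) *
          (∫⁻ y in ball z r, ω y ^ (-(1 / (p - 1)))) ^ (p - 1)) := by
        gcongr; exact holder.trans (mul_le_mul_right hσ _)
    _ = (volume (ball z r) ^ (-p) * wSet ω (ball z r) *
          (∫⁻ y in ball z r, ω y ^ (-(1 / (p - 1)))) ^ (p - 1)) *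
            ∫⁻ y in A, g y ^ p * ω y := by ring
    _ ≤ (C.toNNReal + 1 : ℝ≥0) * ∫⁻ y in A, g y ^ p * ω y := by
        gcongr
        refine (hCB z r hr).trans ?_
        rw [ENNReal.coe_add, ENNReal.coe_toNNReal hC]
        exact le_self_add
    _ = _ := by
      rw [ENNReal.coe_rpow_of_nonneg _ (by positivity), one_div, ENNReal.rpow_inv_rpow hp0.ne']

theorem exists_inv_le_and_le_mul {β₀ β₁ : ℝ≥0} (hβ₀ : 0 < β₀) (hβ₁ : 0 < β₁) {s : ℝ≥0∞}
    (hs : (β₀ : ℝ≥0∞) ≤ s) (hs' : s ≠ ⊤) :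
    ∃ S : ℝ≥0∞, (β₀ : ℝ≥0∞)⁻¹ ≤ S ∧ S ≠ ⊤ ∧ s ≤ β₁ * S ∧
      S ≤ ((β₀ : ℝ≥0∞)⁻¹ * (β₀ : ℝ≥0∞)⁻¹ + (β₁ : ℝ≥0∞)⁻¹) * s := by
  have hβ₀' : (β₀ : ℝ≥0∞) ≠ 0 := by simpa using hβ₀.ne'
  have hβ₁' : (β₁ : ℝ≥0∞) ≠ 0 := by simpa using hβ₁.ne'
  refine ⟨(β₀ : ℝ≥0∞)⁻¹ + (β₁ : ℝ≥0∞)⁻¹ * s, le_self_add, by finiteness, ?_, ?_⟩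
  · calc s = β₁ * ((β₁ : ℝ≥0∞)⁻¹ * s) := by
          rw [← mul_assoc, ENNReal.mul_inv_cancel hβ₁' ENNReal.coe_ne_top, one_mul]
      _ ≤ β₁ * ((β₀ : ℝ≥0∞)⁻¹ + (β₁ : ℝ≥0∞)⁻¹ * s) := by gcongr; exact le_add_self
  · rw [add_mul, mul_assoc]
    gcongr
    calc (β₀ : ℝ≥0∞)⁻¹ = (β₀ : ℝ≥0∞)⁻¹ * ((β₀ : ℝ≥0∞)⁻¹ * β₀) := by
          rw [ENNReal.inv_mul_cancel hβ₀' ENNReal.coe_ne_top, mul_one]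
      _ ≤ (β₀ : ℝ≥0∞)⁻¹ * ((β₀ : ℝ≥0∞)⁻¹ * s) := by gcongr

theorem exists_nnreal_pos_mul_le_one_and_mul_lt_one {X Y : ℝ≥0∞} (hX : X ≠ ⊤) (hY : Y ≠ ⊤) :
    ∃ β : ℝ≥0, 0 < β ∧ β * X ≤ 1 ∧ β * Y < 1 := by
  obtain ⟨β, hβ, hβXY⟩ := ENNReal.exists_nnreal_pos_mul_lt (ENNReal.add_ne_top.2 ⟨hX, hY⟩)
    one_ne_zero
  exact ⟨β, hβ, (mul_le_mul_right le_self_add _).trans hβXY.le,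
    (mul_le_mul_right le_add_self _).trans_lt hβXY⟩

section WeakPhi

variable {n : ℕ} {Ω A : Set (Rn n)} {φ : Rn n → ℝ≥0∞ → ℝ≥0∞} {p : ℝ} {a β₀ : ℝ≥0}

theorem IsWeakPhi.ae_isNormalizedPhi (hφ : IsWeakPhi Ω φ) (ha : 1 ≤ a)
    (hA0 : ∀ᵐ x ∂(volume : Measure (Rn n)), x ∈ Ω → φ x β₀ ≤ 1 ∧ 1 ≤ φ x ((β₀ : ℝ≥0∞)⁻¹))
    (hInc : ∀ᵐ x ∂(volume : Measure (Rn n)), x ∈ Ω → ∀ s t : ℝ≥0, 0 < s → s < t →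
      φ x s / (s : ℝ≥0∞) ^ p ≤ a * (φ x t / (t : ℝ≥0∞) ^ p)) :
    ∀ᵐ x ∂(volume : Measure (Rn n)), x ∈ Ω → IsNormalizedPhi (φ x) p a β₀ := by
  filter_upwards [hφ.mono, hφ.map_zero, hφ.tendsto_top, hA0, hInc]
    with x hmono hzero htop hA0 hinc hx
  exact
    { mono := hmono hx
      map_zero := hzero hx
      map_top := top_le_iff.1 (le_of_tendsto' (htop hx) fun _ => hmono hx le_top)
      one_le_const := ha
      aInc := hinc hx
      apply_le_one := (hA0 hx).1
      one_le_apply := (hA0 hx).2 }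

theorem setLIntegral_le_mul_setLIntegral_rpow_one_div (hA : MeasurableSet A)
    (hnorm : ∀ᵐ y ∂(volume : Measure (Rn n)), y ∈ A → IsNormalizedPhi (φ y) p a β₀)
    (hp : 0 < p) (hβ₀ : 0 < β₀) {f : Rn n → ℝ≥0∞}
    (hf : ∀ᵐ y ∂(volume : Measure (Rn n)), f y = 0 ∨ (β₀ : ℝ≥0∞)⁻¹ < f y) :
    ∫⁻ y in A, f y ≤ (a : ℝ≥0∞) ^ (1 / p) / β₀ * ∫⁻ y in A, φ y (f y) ^ (1 / p) := by
  rw [← lintegral_const_mul' _ _ (ENNReal.div_ne_top (by finiteness) (by simp [hβ₀.ne']))]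
  refine lintegral_mono_ae ((ae_restrict_iff' hA).2 ?_)
  filter_upwards [hnorm, hf] with y hy hfy hyA
  rcases hfy with h0 | hlt
  · simp [h0]
  · exact (hy hyA).le_mul_rpow_one_div_apply hp hlt

theorem setLIntegral_mul_le_of_transfer (hA : MeasurableSet A)
    (hnorm : ∀ᵐ y ∂(volume : Measure (Rn n)), y ∈ A → IsNormalizedPhi (φ y) p a β₀)
    (hp : 0 < p) {χ : ℝ≥0∞ → ℝ≥0∞} (hχ : Monotone χ) {β₁ : ℝ≥0} {s S m : ℝ≥0∞}
    (hS : (β₀ : ℝ≥0∞)⁻¹ ≤ S) (hS' : S ≠ ⊤) (hsS : s ≤ β₁ * S) (hms : m ^ p < χ s)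
    (htransfer : ∀ᵐ y ∂(volume : Measure (Rn n)), y ∈ A →
      ∀ t : ℝ≥0, 1 ≤ φ y t → φ y t ≤ m ^ p → χ (β₁ * t) ≤ φ y t) (f : Rn n → ℝ≥0∞) :
    (∫⁻ y in A, f y) * m ≤
      S * m * volume A + 2 * (a : ℝ≥0∞) ^ (1 / p) * S * ∫⁻ y in A, φ y (f y) ^ (1 / p) := by
  calc (∫⁻ y in A, f y) * m ≤ ∫⁻ y in A, f y * m := lintegral_mul_const_le _ _
    _ ≤ ∫⁻ y in A, S * m + 2 * (a : ℝ≥0∞) ^ (1 / p) * S * φ y (f y) ^ (1 / p) := by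
      refine lintegral_mono_ae ((ae_restrict_iff' hA).2 ?_)
      filter_upwards [hnorm, htransfer] with y hy hyT hyA
      exact (hy hyA).mul_le_of_transfer hp hχ hS hS' hsS hms (hyT hyA) (f y)
    _ = _ := by
      rw [lintegral_add_left measurable_const, setLIntegral_const,
        lintegral_const_mul' _ _ (by finiteness)]

theorem ae_apply_le_rpow_of_transfer (hA : MeasurableSet A)
    (hnorm : ∀ᵐ y ∂(volume : Measure (Rn n)), y ∈ A → IsNormalizedPhi (φ y) p a β₀)
    (hp : 0 < p) {f : Rn n → ℝ≥0∞} {V m Λ : ℝ≥0∞} (hAV : volume A ≤ V) (hV : V ≠ 0)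
    (hV' : V ≠ ⊤) (hm : m ≠ 0) (hm' : m ≠ ⊤)
    (hΦ : V⁻¹ * ∫⁻ y in A, φ y (f y) ^ (1 / p) ≤ Λ * m) {β₁ : ℝ≥0} {s S : ℝ≥0∞}
    (hS : (β₀ : ℝ≥0∞)⁻¹ ≤ S) (hS' : S ≠ ⊤) (hsS : s ≤ β₁ * S)
    (hSJ : (1 + 2 * (a : ℝ≥0∞) ^ (1 / p) * Λ) * S < V⁻¹ * ∫⁻ y in A, f y)
    (htransfer : ∀ᵐ x ∂(volume : Measure (Rn n)), ∀ᵐ y ∂(volume : Measure (Rn n)),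
      x ∈ A → y ∈ A → ∀ t : ℝ≥0, 1 ≤ φ y t → φ y t ≤ m ^ p → φ x (β₁ * t) ≤ φ y t) :
    ∀ᵐ x ∂(volume : Measure (Rn n)), x ∈ A → φ x s ≤ m ^ p := by
  filter_upwards [htransfer, hnorm] with x hxT hx hxA
  by_contra! hms
  have hint := setLIntegral_mul_le_of_transfer hA hnorm hp (hx hxA).mono hS hS' hsS hms
    (hxT.mono fun _ hy => hy hxA) f
  have hAV' : V⁻¹ * volume A ≤ 1 :=
    (mul_le_mul_right hAV _).trans (ENNReal.inv_mul_cancel hV hV').le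
  refine hSJ.not_ge ((ENNReal.mul_le_mul_iff_left hm hm').1 ?_)
  calc V⁻¹ * (∫⁻ y in A, f y) * m = V⁻¹ * ((∫⁻ y in A, f y) * m) := mul_assoc _ _ _
    _ ≤ V⁻¹ * (S * m * volume A +
          2 * (a : ℝ≥0∞) ^ (1 / p) * S * ∫⁻ y in A, φ y (f y) ^ (1 / p)) := by gcongr
    _ = S * m * (V⁻¹ * volume A) +
          2 * (a : ℝ≥0∞) ^ (1 / p) * S * (V⁻¹ * ∫⁻ y in A, φ y (f y) ^ (1 / p)) := by ring
    _ ≤ S * m * 1 + 2 * (a : ℝ≥0∞) ^ (1 / p) * S * (Λ * m) := by gcongr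
    _ = (1 + 2 * (a : ℝ≥0∞) ^ (1 / p) * Λ) * S * m := by ring

theorem ae_apply_le_rpow_of_le (hA : MeasurableSet A)
    (hnorm : ∀ᵐ y ∂(volume : Measure (Rn n)), y ∈ A → IsNormalizedPhi (φ y) p a β₀)
    (hp : 0 < p) {f : Rn n → ℝ≥0∞} {V W m Λ : ℝ≥0∞} (hAV : volume A ≤ V) (hV : V ≠ 0)
    (hV' : V ≠ ⊤) {β β₁ : ℝ≥0} (hβ₀ : 0 < β₀) (hβ₁ : 0 < β₁)
    (hβD : β * ((1 + 2 * (a : ℝ≥0∞) ^ (1 / p) * Λ) *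
      ((β₀ : ℝ≥0∞)⁻¹ * (β₀ : ℝ≥0∞)⁻¹ + (β₁ : ℝ≥0∞)⁻¹)) < 1)
    (hm : 1 ≤ m) (hm' : m ≠ ⊤) (hWm : W * m ^ p ≤ 1)
    (hΦ : V⁻¹ * ∫⁻ y in A, φ y (f y) ^ (1 / p) ≤ Λ * m)
    (hA1 : W ≤ 1 → ∀ᵐ x ∂(volume : Measure (Rn n)), ∀ᵐ y ∂(volume : Measure (Rn n)),
      x ∈ A → y ∈ A → ∀ t : ℝ≥0, 1 ≤ φ y t → φ y t ≤ W⁻¹ → φ x (β₁ * t) ≤ φ y t)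
    (hs : (β₀ : ℝ≥0∞) ≤ β * V⁻¹ * ∫⁻ y in A, f y) (hJ : V⁻¹ * ∫⁻ y in A, f y ≠ ⊤) :
    ∀ᵐ x ∂(volume : Measure (Rn n)), x ∈ A → φ x (β * V⁻¹ * ∫⁻ y in A, f y) ≤ m ^ p := by
  have hW : W ≤ 1 := (le_mul_of_one_le_right' (ENNReal.one_le_rpow hm hp)).trans hWm
  have hmW : m ^ p ≤ W⁻¹ := ENNReal.le_inv_iff_mul_le.2 (by rwa [mul_comm])
  have hJ0 : V⁻¹ * ∫⁻ y in A, f y ≠ 0 := by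
    rintro h
    rw [mul_assoc, h, mul_zero, nonpos_iff_eq_zero] at hs
    exact hβ₀.ne' (by exact_mod_cast hs)
  obtain ⟨S, hS, hS', hsS, hSs⟩ := exists_inv_le_and_le_mul hβ₀ hβ₁ hs
    (by rw [mul_assoc]; exact ENNReal.mul_ne_top ENNReal.coe_ne_top hJ)
  refine ae_apply_le_rpow_of_transfer hA hnorm hp hAV hV hV' (zero_lt_one.trans_le hm).ne' hm'
    hΦ hS hS' hsS ?_
    ((hA1 hW).mono fun _ hx => hx.mono fun _ hy hxA hyA t h1 h2 => hy hxA hyA t h1 (h2.trans hmW))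
  calc (1 + 2 * (a : ℝ≥0∞) ^ (1 / p) * Λ) * S
      ≤ (1 + 2 * (a : ℝ≥0∞) ^ (1 / p) * Λ) *
          (((β₀ : ℝ≥0∞)⁻¹ * (β₀ : ℝ≥0∞)⁻¹ + (β₁ : ℝ≥0∞)⁻¹) * (β * V⁻¹ * ∫⁻ y in A, f y)) := by
        gcongr
    _ = β * ((1 + 2 * (a : ℝ≥0∞) ^ (1 / p) * Λ) *
          ((β₀ : ℝ≥0∞)⁻¹ * (β₀ : ℝ≥0∞)⁻¹ + (β₁ : ℝ≥0∞)⁻¹)) * (V⁻¹ * ∫⁻ y in A, f y) := by ring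
    _ < 1 * (V⁻¹ * ∫⁻ y in A, f y) := ENNReal.mul_lt_mul_left hJ0 hJ hβD
    _ = V⁻¹ * ∫⁻ y in A, f y := one_mul _

theorem ae_rpow_one_div_apply_le_of_le (hA : MeasurableSet A)
    (hnorm : ∀ᵐ y ∂(volume : Measure (Rn n)), y ∈ A → IsNormalizedPhi (φ y) p a β₀)
    (hp : 0 < p) {f : Rn n → ℝ≥0∞} {V W : ℝ≥0∞} (hAV : volume A ≤ V) (hV : V ≠ 0)
    (hV' : V ≠ ⊤) {β β₁ Λ : ℝ≥0} (ha : 1 ≤ a) (hβ₀ : 0 < β₀) (hβ₁ : 0 < β₁) (hΛ : 1 ≤ Λ)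
    (hβκ : β * ((a : ℝ≥0∞) ^ (1 / p) / β₀ * ((a : ℝ≥0∞) ^ (1 / p) / β₀) * Λ) ≤ 1)
    (hβD : β * ((1 + 2 * (a : ℝ≥0∞) ^ (1 / p) * Λ) *
      ((β₀ : ℝ≥0∞)⁻¹ * (β₀ : ℝ≥0∞)⁻¹ + (β₁ : ℝ≥0∞)⁻¹)) < 1)
    (hJ : ∫⁻ y in A, f y ≤ (a : ℝ≥0∞) ^ (1 / p) / β₀ * ∫⁻ y in A, φ y (f y) ^ (1 / p))
    (hWΦ : W * (V⁻¹ * ∫⁻ y in A, φ y (f y) ^ (1 / p)) ^ p ≤ (Λ : ℝ≥0∞) ^ p)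
    (hA1 : W ≤ 1 → ∀ᵐ x ∂(volume : Measure (Rn n)), ∀ᵐ y ∂(volume : Measure (Rn n)),
      x ∈ A → y ∈ A → ∀ t : ℝ≥0, 1 ≤ φ y t → φ y t ≤ W⁻¹ → φ x (β₁ * t) ≤ φ y t)
    (hs : (β₀ : ℝ≥0∞) ≤ β * V⁻¹ * ∫⁻ y in A, f y) :
    ∀ᵐ x ∂(volume : Measure (Rn n)), x ∈ A →
      φ x (β * V⁻¹ * ∫⁻ y in A, f y) ^ (1 / p) ≤
        2 * V⁻¹ * ∫⁻ y in A, φ y (f y) ^ (1 / p) := by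
  set κ := (a : ℝ≥0∞) ^ (1 / p) / β₀
  set M := V⁻¹ * ∫⁻ y in A, φ y (f y) ^ (1 / p)
  rcases eq_or_ne M ⊤ with hM | hM
  · refine ae_of_all _ fun x _ => ?_
    calc _ ≤ ⊤ := le_top
      _ = 2 * M := by rw [hM, ENNReal.mul_top two_ne_zero]
      _ = _ := (mul_assoc _ _ _).symm
  have hΛ0 : (Λ : ℝ≥0∞) ≠ 0 := by simpa using (zero_lt_one.trans_le hΛ).ne'
  have hΛM : (Λ : ℝ≥0∞) ≤ M := calc
    (Λ : ℝ≥0∞) ≤ Λ * (κ * β₀) := by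
      refine le_mul_of_one_le_right' ?_
      rw [ENNReal.div_mul_cancel (by simpa using hβ₀.ne') ENNReal.coe_ne_top]
      exact ENNReal.one_le_rpow (by exact_mod_cast ha) (by positivity)
    _ ≤ Λ * (κ * (β * (κ * M))) := by
      gcongr
      calc (β₀ : ℝ≥0∞) ≤ β * V⁻¹ * ∫⁻ y in A, f y := hs
        _ ≤ β * V⁻¹ * (κ * ∫⁻ y in A, φ y (f y) ^ (1 / p)) := by gcongr
        _ = β * (κ * M) := by simp only [M]; ring
    _ = β * (κ * κ * Λ) * M := by ring
    _ ≤ 1 * M := by gcongr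
    _ = M := one_mul M
  set m := M / Λ
  have hΛm : Λ * m = M := ENNReal.mul_div_cancel hΛ0 ENNReal.coe_ne_top
  have hm : 1 ≤ m := (ENNReal.le_div_iff_mul_le (Or.inl hΛ0) (Or.inl ENNReal.coe_ne_top)).2
    (by rwa [one_mul])
  have hWm : W * m ^ p ≤ 1 := by
    rw [ENNReal.div_rpow_of_nonneg _ _ hp.le, ← mul_div_assoc]
    exact ENNReal.div_le_of_le_mul (by rwa [one_mul])
  have hJ' : V⁻¹ * ∫⁻ y in A, f y ≠ ⊤ :=
    ne_top_of_le_ne_top (ENNReal.mul_ne_top (by finiteness) hM) <| calc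
      V⁻¹ * ∫⁻ y in A, f y ≤ V⁻¹ * (κ * ∫⁻ y in A, φ y (f y) ^ (1 / p)) := by gcongr
      _ = κ * M := by simp only [M]; ring
  filter_upwards [ae_apply_le_rpow_of_le hA hnorm hp hAV hV hV' hβ₀ hβ₁ hβD hm
    (ENNReal.div_ne_top hM hΛ0) hWm hΛm.ge hA1 hs hJ'] with x hx hxA
  calc φ x (β * V⁻¹ * ∫⁻ y in A, f y) ^ (1 / p) ≤ (m ^ p) ^ (1 / p) :=
        ENNReal.rpow_le_rpow (hx hxA) (by positivity)
    _ = m := by rw [one_div, ENNReal.rpow_rpow_inv hp.ne']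
    _ ≤ Λ * m := le_mul_of_one_le_left' (by exact_mod_cast hΛ)
    _ = M := hΛm
    _ ≤ 2 * M := le_mul_of_one_le_left' one_le_two
    _ = 2 * V⁻¹ * ∫⁻ y in A, φ y (f y) ^ (1 / p) := (mul_assoc _ _ _).symm

theorem ae_rpow_one_div_apply_le_of_lt
    (hnorm : ∀ᵐ y ∂(volume : Measure (Rn n)), y ∈ A → IsNormalizedPhi (φ y) p a β₀)
    (hp : 0 < p) {f : Rn n → ℝ≥0∞} {V : ℝ≥0∞} {β : ℝ≥0}
    (hβκ : β * ((a : ℝ≥0∞) ^ (1 / p) / β₀ * ((a : ℝ≥0∞) ^ (1 / p) / β₀)) ≤ 1)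
    (hJ : ∫⁻ y in A, f y ≤ (a : ℝ≥0∞) ^ (1 / p) / β₀ * ∫⁻ y in A, φ y (f y) ^ (1 / p))
    (hs : β * V⁻¹ * ∫⁻ y in A, f y < β₀) :
    ∀ᵐ x ∂(volume : Measure (Rn n)), x ∈ A →
      φ x (β * V⁻¹ * ∫⁻ y in A, f y) ^ (1 / p) ≤
        2 * V⁻¹ * ∫⁻ y in A, φ y (f y) ^ (1 / p) := by
  filter_upwards [hnorm] with x hx hxA
  calc φ x (β * V⁻¹ * ∫⁻ y in A, f y) ^ (1 / p)
      ≤ (a : ℝ≥0∞) ^ (1 / p) / β₀ * (β * V⁻¹ * ∫⁻ y in A, f y) :=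
        (hx hxA).rpow_one_div_apply_le hp hs
    _ ≤ (a : ℝ≥0∞) ^ (1 / p) / β₀ *
          (β * V⁻¹ * ((a : ℝ≥0∞) ^ (1 / p) / β₀ * ∫⁻ y in A, φ y (f y) ^ (1 / p))) := by
        gcongr
    _ = β * ((a : ℝ≥0∞) ^ (1 / p) / β₀ * ((a : ℝ≥0∞) ^ (1 / p) / β₀)) *
          (V⁻¹ * ∫⁻ y in A, φ y (f y) ^ (1 / p)) := by ring
    _ ≤ 1 * (V⁻¹ * ∫⁻ y in A, φ y (f y) ^ (1 / p)) := by gcongr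
    _ ≤ 2 * V⁻¹ * ∫⁻ y in A, φ y (f y) ^ (1 / p) := by
        rw [mul_assoc]; gcongr; exact one_le_two

end WeakPhi

theorem key_estimate_large_part_general
    (n : ℕ) (Ω : Set (Rn n)) (hΩ : IsOpen Ω)
    (φ : Rn n → ℝ≥0∞ → ℝ≥0∞) (ω : Rn n → ℝ≥0∞) (p : ℝ) (hp1 : 1 < p)
    (hφ : IsWeakPhi Ω φ)
    (β₀ : ℝ≥0) (hβ₀pos : 0 < β₀)
    (hA0 : ∀ᵐ x ∂(volume : Measure (Rn n)), x ∈ Ω →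
      φ x β₀ ≤ 1 ∧ 1 ≤ φ x ((β₀ : ℝ≥0∞)⁻¹))
    (hA1 : A1w Ω ω φ) (hInc : AInc Ω φ p) (hω : MuckenhouptAq p ω) :
    ∃ β : ℝ≥0, 0 < β ∧ ∀ f : Rn n → ℝ≥0∞, Measurable f →
      wModular Ω ω φ f ≤ 1 →
      (∀ᵐ y ∂(volume : Measure (Rn n)), f y = 0 ∨ (β₀ : ℝ≥0∞)⁻¹ < f y) →
        ∀ (z : Rn n) (r : ℝ), 0 < r →
          ∀ᵐ x ∂(volume : Measure (Rn n)), x ∈ ball z r ∩ Ω →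
            (φ x ((β : ℝ≥0∞) * (volume (ball z r))⁻¹ *
                ∫⁻ y in ball z r ∩ Ω, f y)) ^ (1 / p) ≤
              2 * (volume (ball z r))⁻¹ *
                ∫⁻ y in ball z r ∩ Ω, (φ y (f y)) ^ (1 / p) := by
  obtain ⟨a, ha, hInc⟩ := hInc
  obtain ⟨β₁, hβ₁, -, hA1⟩ := hA1
  obtain ⟨Λ, hΛ, hAp⟩ := hω.exists_wSet_mul_average_rpow_le hp1
  have hp : 0 < p := by linarith
  have hnorm := hφ.ae_isNormalizedPhi ha hA0 hInc
  obtain ⟨β, hβ, hβκ, hβD⟩ := exists_nnreal_pos_mul_le_one_and_mul_lt_one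
    (X := (a : ℝ≥0∞) ^ (1 / p) / β₀ * ((a : ℝ≥0∞) ^ (1 / p) / β₀) * Λ)
    (Y := (1 + 2 * (a : ℝ≥0∞) ^ (1 / p) * Λ) *
      ((β₀ : ℝ≥0∞)⁻¹ * (β₀ : ℝ≥0∞)⁻¹ + (β₁ : ℝ≥0∞)⁻¹)) (by finiteness) (by finiteness)
  refine ⟨β, hβ, fun f hf hρ hf0 z r hr => ?_⟩
  have hB : MeasurableSet (ball z r ∩ Ω) := measurableSet_ball.inter hΩ.measurableSet
  have hnormB := hnorm.mono fun _ hy (hyB : _ ∈ ball z r ∩ Ω) => hy hyB.2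
  have hJ := setLIntegral_le_mul_setLIntegral_rpow_one_div hB hnormB hp hβ₀pos hf0
  have hWM := (hAp z r hr _ inter_subset_left _
    ((hφ.meas f hf).pow_const (1 / p)).aemeasurable).trans <| mul_le_of_le_one_right' <| by
      simp_rw [one_div, ENNReal.rpow_inv_rpow hp.ne']
      exact (lintegral_mono_set inter_subset_right).trans hρ
  rcases lt_or_ge ((β : ℝ≥0∞) * (volume (ball z r))⁻¹ * ∫⁻ y in ball z r ∩ Ω, f y) β₀ with hs | hs
  · refine ae_rpow_one_div_apply_le_of_lt hnormB hp (le_trans ?_ hβκ) hJ hs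
    exact mul_le_mul_right (le_mul_of_one_le_right' (by exact_mod_cast hΛ)) _
  · exact ae_rpow_one_div_apply_le_of_le hB hnormB hp (measure_mono inter_subset_left)
      (measure_ball_pos _ z hr).ne' measure_ball_lt_top.ne ha hβ₀pos hβ₁ hΛ hβκ hβD hJ hWM
      (hA1 z r hr) hs

/-- Key estimate for the part of `f` with large values. -/
theorem key_estimate_large_part
    (n : ℕ) (Ω : Set (Rn n)) (hΩ : IsOpen Ω)
    (φ : Rn n → ℝ≥0∞ → ℝ≥0∞) (ω : Rn n → ℝ≥0∞) (p : ℝ) (hp1 : 1 < p)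
    (hφ : IsWeakPhi Ω φ)
    (β₀ : ℝ≥0) (hβ₀pos : 0 < β₀) (hβ₀le : β₀ ≤ 1)
    (hA0 : ∀ᵐ x ∂(volume : Measure (Rn n)), x ∈ Ω →
      φ x β₀ ≤ 1 ∧ 1 ≤ φ x ((β₀ : ℝ≥0∞)⁻¹))
    (hA1 : A1w Ω ω φ) (hInc : AInc Ω φ p) (hω : MuckenhouptAq p ω) :
    ∃ β : ℝ≥0, 0 < β ∧ ∀ f : Rn n → ℝ≥0∞, Measurable f →
      wModular Ω ω φ f ≤ 1 →
      (∀ᵐ y ∂(volume : Measure (Rn n)), f y = 0 ∨ (β₀ : ℝ≥0∞)⁻¹ < f y) →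
        ∀ (z : Rn n) (r : ℝ), 0 < r →
          ∀ᵐ x ∂(volume : Measure (Rn n)), x ∈ ball z r ∩ Ω →
            (φ x ((β : ℝ≥0∞) * (volume (ball z r))⁻¹ *
                ∫⁻ y in ball z r ∩ Ω, f y)) ^ (1 / p) ≤
              2 * (volume (ball z r))⁻¹ *
                ∫⁻ y in ball z r ∩ Ω, (φ y (f y)) ^ (1 / p) :=
  key_estimate_large_part_general n Ω hΩ φ ω p hp1 hφ β₀ hβ₀pos hA0 hA1 hInc hω
end
end

section
/- Let Ω ⊆ ℝⁿ be open, let ω be a weight, and let φ ∈ Φ_w(Ω) satisfy (A0), (A2)_ω and (aInc)_p with p ∈ (0,∞). Then there exist β > 0 and a nonnegative h ∈ L¹(Ω,ω) ∩ L^∞(Ω) such that for every open ball B, a.e. x ∈ B∩Ω, and every measurable f with 0 ≤ f ≤ 1/β₀ (where β₀ is the constant from (A0)), one has φ(x, (β/|B|)∫_{B∩Ω} f dy)^{1/p} ≤ (1/|B|)∫_{B∩Ω} φ(y, f(y))^{1/p} dy + h(x)^{1/p} + (1/|B|)∫_{B∩Ω} h(y)^{1/p} dy. -/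
open MeasureTheory Metric Filter Set
open scoped ENNReal NNReal Topology

noncomputable section

/-!
Pointwise, (A0) gives `φ(y, β₀² f(y)) ≤ φ(y, β₀) ≤ 1`, so (A2)_ω with `s = 1` applies, and
(aInc)_p shrinks the argument by a further `θ = (3a)^{-1/p}`, so that
`φ(x, θ β₂ β₀² f(y)) ≤ (φ(y, f(y)) + h(x) + h(y)) / 3`; the factor `1/3` pays for taking
`1/p`-th powers of a sum of three terms.

On averages, `ψ = φ(x, ·)^{1/p}` satisfies (aInc)₁ with constant `a^{1/p}`, and this is enough for
a Jensen inequality `ψ(T / (2 a^{2/p})) ≤ ⨍ ψ ∘ g` where `T = ⨍ g`: the set `{g > T/2}` carries at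
least half of `∫ g`, and on it `ψ(g) ≥ g ψ(T/2) / (a T/2)`.
-/

lemma ENNReal.rpow_inv_three_mul_add_le (u v w : ℝ≥0∞) {q : ℝ} (hq : 0 ≤ q) :
    (3⁻¹ * (u + v + w)) ^ q ≤ u ^ q + v ^ q + w ^ q := by
  have hmono : Monotone fun x : ℝ≥0∞ => x ^ q := fun _ _ h => ENNReal.rpow_le_rpow h hq
  have hmax : 3⁻¹ * (u + v + w) ≤ max u (max v w) := by
    rw [ENNReal.inv_mul_le_iff (by norm_num) (by norm_num)]
    calc u + v + w ≤ max u (max v w) + max u (max v w) + max u (max v w) := by gcongr <;> simp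
      _ = 3 * max u (max v w) := by ring
  calc (3⁻¹ * (u + v + w)) ^ q ≤ max u (max v w) ^ q := hmono hmax
    _ = max (u ^ q) (max (v ^ q) (w ^ q)) := by rw [hmono.map_max, hmono.map_max]
    _ ≤ u ^ q + v ^ q + w ^ q :=
      max_le (le_add_right (le_add_right le_rfl)) (max_le (le_add_right le_add_self) le_add_self)

-- `(aInc)_p` of a single function, cross-multiplied so that no `0⁻¹` or `∞⁻¹` occurs; allowing
-- `s = t` costs nothing since `1 ≤ a`.
def IsAInc (p : ℝ) (a : ℝ≥0) (ψ : ℝ≥0∞ → ℝ≥0∞) : Prop :=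
  ∀ s t : ℝ≥0∞, 0 < s → s ≤ t → t ≠ ∞ → t ^ p * ψ s ≤ a * s ^ p * ψ t

lemma isAInc_of_div_rpow_le {p : ℝ} {a : ℝ≥0} {ψ : ℝ≥0∞ → ℝ≥0∞} (ha : 1 ≤ a)
    (h : ∀ s t : ℝ≥0, 0 < s → s < t → ψ s / (s : ℝ≥0∞) ^ p ≤ a * (ψ t / (t : ℝ≥0∞) ^ p)) :
    IsAInc p a ψ := by
  intro s t hs hst ht
  rcases hst.lt_or_eq with hlt | rfl
  · lift t to ℝ≥0 using ht
    lift s to ℝ≥0 using (hlt.trans ENNReal.coe_lt_top).ne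
    have hsp0 : (s : ℝ≥0∞) ^ p ≠ 0 := (ENNReal.rpow_pos hs ENNReal.coe_ne_top).ne'
    have hsp : (s : ℝ≥0∞) ^ p ≠ ∞ := ENNReal.rpow_ne_top_of_ne_zero hs.ne' ENNReal.coe_ne_top
    calc (t : ℝ≥0∞) ^ p * ψ s = (t : ℝ≥0∞) ^ p * (s : ℝ≥0∞) ^ p * (ψ s / (s : ℝ≥0∞) ^ p) := by
          rw [mul_assoc, ENNReal.mul_div_cancel hsp0 hsp]
      _ ≤ (t : ℝ≥0∞) ^ p * (s : ℝ≥0∞) ^ p * (a * (ψ t / (t : ℝ≥0∞) ^ p)) := by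
          gcongr
          exact h s t (by exact_mod_cast hs) (by exact_mod_cast hlt)
      _ = a * (s : ℝ≥0∞) ^ p * ((t : ℝ≥0∞) ^ p * (ψ t / (t : ℝ≥0∞) ^ p)) := by ring
      _ ≤ a * (s : ℝ≥0∞) ^ p * ψ t := by gcongr; exact ENNReal.mul_div_le
  · calc s ^ p * ψ s = 1 * s ^ p * ψ s := by rw [one_mul]
      _ ≤ a * s ^ p * ψ s := by gcongr; exact_mod_cast ha

namespace IsAInc

variable {p : ℝ} {a : ℝ≥0} {ψ : ℝ≥0∞ → ℝ≥0∞}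

lemma rpow_inv (hψ : IsAInc p a ψ) (hp : 0 < p) :
    IsAInc 1 (a ^ (1 / p)) fun t => ψ t ^ (1 / p) := by
  intro s t hs hst ht
  have hp' : 0 ≤ 1 / p := by positivity
  have key := ENNReal.rpow_le_rpow (hψ s t hs hst ht) hp'
  rw [ENNReal.mul_rpow_of_nonneg _ _ hp', ENNReal.mul_rpow_of_nonneg _ _ hp',
    ENNReal.mul_rpow_of_nonneg _ _ hp', ← ENNReal.rpow_mul, ← ENNReal.rpow_mul,
    mul_one_div_cancel hp.ne', ENNReal.rpow_one, ENNReal.rpow_one,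
    ← ENNReal.coe_rpow_of_nonneg _ hp'] at key
  simpa only [ENNReal.rpow_one] using key

lemma mul_apply_le (hψ : IsAInc 1 a ψ) {s t : ℝ≥0∞} (hs : 0 < s) (hst : s ≤ t) (ht : t ≠ ∞) :
    t * ψ s ≤ a * s * ψ t := by
  simpa only [ENNReal.rpow_one] using hψ s t hs hst ht

lemma apply_mul_le (hψ : IsAInc p a ψ) {θ u : ℝ≥0∞} (hθ : 0 < θ) (hθ1 : θ ≤ 1) (hu : 0 < u)
    (hu' : u ≠ ∞) : ψ (θ * u) ≤ a * θ ^ p * ψ u := by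
  have hup0 : u ^ p ≠ 0 := (ENNReal.rpow_pos hu hu').ne'
  have hup : u ^ p ≠ ∞ := ENNReal.rpow_ne_top_of_ne_zero hu.ne' hu'
  have key := hψ (θ * u) u (ENNReal.mul_pos hθ.ne' hu.ne') (mul_le_of_le_one_left' hθ1) hu'
  rw [ENNReal.mul_rpow_of_ne_top (hθ1.trans_lt ENNReal.one_lt_top).ne hu'] at key
  rw [← ENNReal.mul_le_mul_iff_left hup0 hup]
  calc ψ (θ * u) * u ^ p = u ^ p * ψ (θ * u) := mul_comm _ _
    _ ≤ a * (θ ^ p * u ^ p) * ψ u := key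
    _ = a * θ ^ p * ψ u * u ^ p := by ring

lemma apply_le_inv_three_mul (hψ : IsAInc p a ψ) (hp : 0 < p) (ha : 1 ≤ a) (hψ0 : ψ 0 = 0)
    {u : ℝ≥0∞} (hu : u ≠ ∞) : ψ (((3 * a)⁻¹ ^ p⁻¹ : ℝ≥0) * u) ≤ 3⁻¹ * ψ u := by
  rcases eq_or_ne u 0 with rfl | hu0
  · simp [hψ0]
  have h3a : 1 ≤ 3 * a := by
    calc (1 : ℝ≥0) ≤ 3 * 1 := by norm_num
      _ ≤ 3 * a := by gcongr
  have h3a0 : (3 * a)⁻¹ ≠ 0 := inv_ne_zero (by positivity)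
  have hθ : (0 : ℝ≥0∞) < ((3 * a)⁻¹ ^ p⁻¹ : ℝ≥0) :=
    ENNReal.coe_pos.2 (NNReal.rpow_pos (pos_iff_ne_zero.2 h3a0))
  have hθ1 : (((3 * a)⁻¹ ^ p⁻¹ : ℝ≥0) : ℝ≥0∞) ≤ 1 :=
    ENNReal.coe_le_one_iff.2 (NNReal.rpow_le_one (inv_le_one_of_one_le₀ h3a) (by positivity))
  have hconst : (a : ℝ≥0∞) * (((3 * a)⁻¹ ^ p⁻¹ : ℝ≥0) : ℝ≥0∞) ^ p = 3⁻¹ := by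
    rw [← ENNReal.coe_rpow_of_nonneg _ hp.le, NNReal.rpow_inv_rpow hp.ne', ← ENNReal.coe_mul,
      mul_inv, ← mul_assoc, mul_comm a, mul_assoc, mul_inv_cancel₀ (by positivity), mul_one,
      ENNReal.coe_inv (by norm_num)]
    norm_num
  calc ψ (((3 * a)⁻¹ ^ p⁻¹ : ℝ≥0) * u)
      ≤ a * (((3 * a)⁻¹ ^ p⁻¹ : ℝ≥0) : ℝ≥0∞) ^ p * ψ u :=
        hψ.apply_mul_le hθ hθ1 (pos_iff_ne_zero.2 hu0) hu
    _ = 3⁻¹ * ψ u := by rw [hconst]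

end IsAInc

section PointwiseEstimate

variable {φx φy : ℝ≥0∞ → ℝ≥0∞} {β₀ β₂ : ℝ≥0} {cx cy t : ℝ≥0∞}

lemma apply_mul_le_add_of_A2 (hφy : Monotone φy) (hβ₀ : 0 < β₀) (hβ₀1 : β₀ ≤ 1)
    (hφyβ₀ : φy β₀ ≤ 1) (hA2 : ∀ s : ℝ≥0, φy s ≤ 1 → φx ↑(β₂ * s) ≤ φy s + cx + cy)
    (ht : t ≤ (β₀ : ℝ≥0∞)⁻¹) : φx ((β₂ * β₀ * β₀ : ℝ≥0) * t) ≤ φy t + cx + cy := by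
  have hβ₀' : (β₀ : ℝ≥0∞) ≠ 0 := ENNReal.coe_ne_zero.2 hβ₀.ne'
  lift t to ℝ≥0 using ne_top_of_le_ne_top (ENNReal.inv_ne_top.2 hβ₀') ht
  have hsmall : ((β₀ * β₀ * t : ℝ≥0) : ℝ≥0∞) ≤ β₀ := by
    calc ((β₀ * β₀ * t : ℝ≥0) : ℝ≥0∞) = β₀ * (β₀ * t) := by push_cast; ring
      _ ≤ β₀ * (β₀ * (β₀ : ℝ≥0∞)⁻¹) := by gcongr
      _ = β₀ := by rw [ENNReal.mul_inv_cancel hβ₀' ENNReal.coe_ne_top, mul_one]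
  have hshrink : ((β₀ * β₀ * t : ℝ≥0) : ℝ≥0∞) ≤ t := by
    push_cast
    calc (β₀ : ℝ≥0∞) * β₀ * t ≤ 1 * 1 * t := by gcongr <;> exact_mod_cast hβ₀1
      _ = t := by ring
  calc φx ((β₂ * β₀ * β₀ : ℝ≥0) * (t : ℝ≥0∞)) = φx ↑(β₂ * (β₀ * β₀ * t)) := by
        push_cast; ring_nf
    _ ≤ φy ↑(β₀ * β₀ * t) + cx + cy := hA2 _ ((hφy hsmall).trans hφyβ₀)
    _ ≤ φy t + cx + cy := by gcongr; exact hφy hshrink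

lemma rpow_apply_le_add_of_A2 {p : ℝ} {a : ℝ≥0} (hp : 0 < p) (hφx : IsAInc p a φx)
    (ha : 1 ≤ a) (hφx0 : φx 0 = 0) (hφy : Monotone φy) (hβ₀ : 0 < β₀) (hβ₀1 : β₀ ≤ 1)
    (hφyβ₀ : φy β₀ ≤ 1) (hA2 : ∀ s : ℝ≥0, φy s ≤ 1 → φx ↑(β₂ * s) ≤ φy s + cx + cy)
    (ht : t ≤ (β₀ : ℝ≥0∞)⁻¹) :
    φx (((3 * a)⁻¹ ^ p⁻¹ * β₂ * β₀ * β₀ : ℝ≥0) * t) ^ (1 / p) ≤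
      φy t ^ (1 / p) + cx ^ (1 / p) + cy ^ (1 / p) := by
  have hu : ((β₂ * β₀ * β₀ : ℝ≥0) : ℝ≥0∞) * t ≠ ∞ :=
    ENNReal.mul_ne_top ENNReal.coe_ne_top
      (ne_top_of_le_ne_top (ENNReal.inv_ne_top.2 (ENNReal.coe_ne_zero.2 hβ₀.ne')) ht)
  calc φx (((3 * a)⁻¹ ^ p⁻¹ * β₂ * β₀ * β₀ : ℝ≥0) * t) ^ (1 / p)
      = φx (((3 * a)⁻¹ ^ p⁻¹ : ℝ≥0) * ((β₂ * β₀ * β₀ : ℝ≥0) * t)) ^ (1 / p) := by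
        push_cast; ring_nf
    _ ≤ (3⁻¹ * φx ((β₂ * β₀ * β₀ : ℝ≥0) * t)) ^ (1 / p) := by
        gcongr; exact hφx.apply_le_inv_three_mul hp ha hφx0 hu
    _ ≤ (3⁻¹ * (φy t + cx + cy)) ^ (1 / p) := by
        gcongr; exact apply_mul_le_add_of_A2 hφy hβ₀ hβ₀1 hφyβ₀ hA2 ht
    _ ≤ φy t ^ (1 / p) + cx ^ (1 / p) + cy ^ (1 / p) :=
        ENNReal.rpow_inv_three_mul_add_le _ _ _ (by positivity)

end PointwiseEstimate

section Average

variable {α : Type*} [MeasurableSpace α] {μ : Measure α} {g : α → ℝ≥0∞} {V : ℝ≥0∞}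

lemma lintegral_le_setLIntegral_lt_add (hg : Measurable g) (c : ℝ≥0∞) :
    ∫⁻ y, g y ∂μ ≤ ∫⁻ y in {y | c < g y}, g y ∂μ + c * μ univ := by
  rw [← lintegral_add_compl g (measurableSet_lt measurable_const hg)]
  gcongr
  calc ∫⁻ y in {y | c < g y}ᶜ, g y ∂μ ≤ ∫⁻ _ in {y | c < g y}ᶜ, c ∂μ :=
        setLIntegral_mono measurable_const fun y hy => not_lt.1 hy
    _ = c * μ {y | c < g y}ᶜ := setLIntegral_const _ _
    _ ≤ c * μ univ := by gcongr; exact subset_univ _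

lemma inv_mul_lintegral_add_const_add_le (hμV : μ univ ≤ V) (F : α → ℝ≥0∞) {G : α → ℝ≥0∞}
    (hG : Measurable G) (c : ℝ≥0∞) :
    V⁻¹ * ∫⁻ y, (F y + c + G y) ∂μ ≤ V⁻¹ * ∫⁻ y, F y ∂μ + c + V⁻¹ * ∫⁻ y, G y ∂μ := by
  rw [lintegral_add_right _ hG, lintegral_add_right _ measurable_const, lintegral_const,
    mul_add, mul_add]
  gcongr
  calc V⁻¹ * (c * μ univ) = c * (V⁻¹ * μ univ) := by ring
    _ ≤ c * (V⁻¹ * V) := by gcongr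
    _ ≤ c := mul_le_of_le_one_right' (ENNReal.inv_mul_le_one V)

namespace IsAInc

variable {ψ : ℝ≥0∞ → ℝ≥0∞} {a : ℝ≥0}

lemma apply_mul_le_mul_lintegral (hψ : IsAInc 1 a ψ) (hg : Measurable g)
    (hg_top : ∀ y, g y ≠ ∞) (hV : V ≠ ∞) (hμV : μ univ ≤ V) {c : ℝ≥0∞} (hc0 : c ≠ 0)
    (hct : c ≠ ∞) (hcI : 2 * (c * V) ≤ ∫⁻ y, g y ∂μ) :
    ψ c * V ≤ a * ∫⁻ y, ψ (g y) ∂μ := by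
  have hcV : c * V ≤ ∫⁻ y in {y | c < g y}, g y ∂μ := by
    refine (ENNReal.add_le_add_iff_right (ENNReal.mul_ne_top hct hV)).1 ?_
    calc c * V + c * V = 2 * (c * V) := (two_mul _).symm
      _ ≤ ∫⁻ y in {y | c < g y}, g y ∂μ + c * μ univ :=
        hcI.trans (lintegral_le_setLIntegral_lt_add hg c)
      _ ≤ ∫⁻ y in {y | c < g y}, g y ∂μ + c * V := by gcongr
  rw [← ENNReal.mul_le_mul_iff_left hc0 hct]
  calc ψ c * V * c = ψ c * (c * V) := by ring
    _ ≤ ψ c * ∫⁻ y in {y | c < g y}, g y ∂μ := by gcongr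
    _ ≤ ∫⁻ y in {y | c < g y}, ψ c * g y ∂μ := lintegral_const_mul_le _ _
    _ ≤ ∫⁻ y in {y | c < g y}, a * c * ψ (g y) ∂μ := by
        refine setLIntegral_mono' (measurableSet_lt measurable_const hg) fun y hy => ?_
        rw [mul_comm]
        exact hψ.mul_apply_le (pos_iff_ne_zero.2 hc0) (le_of_lt hy) (hg_top y)
    _ = a * c * ∫⁻ y in {y | c < g y}, ψ (g y) ∂μ :=
        lintegral_const_mul' _ _ (ENNReal.mul_ne_top ENNReal.coe_ne_top hct)
    _ ≤ a * c * ∫⁻ y, ψ (g y) ∂μ := mul_le_mul_right (setLIntegral_le_lintegral _ _) _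
    _ = a * (∫⁻ y, ψ (g y) ∂μ) * c := by ring

theorem apply_le_inv_mul_lintegral (hψ : IsAInc 1 a ψ) (hψ0 : ψ 0 = 0) (ha : 1 ≤ a)
    (hg : Measurable g) (hg_top : ∀ y, g y ≠ ∞) (hV0 : V ≠ 0) (hV : V ≠ ∞)
    (hμV : μ univ ≤ V) (hI : ∫⁻ y, g y ∂μ ≠ ∞) {W : ℝ≥0∞}
    (hW : 2 * a ^ 2 * W ≤ V⁻¹ * ∫⁻ y, g y ∂μ) :
    ψ W ≤ V⁻¹ * ∫⁻ y, ψ (g y) ∂μ := by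
  rcases eq_or_ne W 0 with rfl | hW0
  · simp [hψ0]
  set T := V⁻¹ * ∫⁻ y, g y ∂μ with hT_def
  set c := T / 2 with hc_def
  have ha' : (1 : ℝ≥0∞) ≤ a := by exact_mod_cast ha
  have haWc : a * (a * W) ≤ c := by
    rw [hc_def, ENNReal.le_div_iff_mul_le (by norm_num) (by norm_num)]
    calc a * (a * W) * 2 = 2 * a ^ 2 * W := by ring
      _ ≤ T := hW
  have hWc : W ≤ c :=
    (le_mul_of_one_le_left' ha').trans ((le_mul_of_one_le_left' ha').trans haWc)
  have hc0 : c ≠ 0 := ne_bot_of_le_ne_bot hW0 hWc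
  have hct : c ≠ ∞ := ENNReal.div_ne_top (ENNReal.mul_ne_top (ENNReal.inv_ne_top.2 hV0) hI)
    two_ne_zero
  have hcI : 2 * (c * V) = ∫⁻ y, g y ∂μ := by
    rw [← mul_assoc, two_mul, hc_def, ENNReal.add_halves, hT_def, mul_comm, ← mul_assoc,
      ENNReal.mul_inv_cancel hV0 hV, one_mul]
  have hψc := hψ.apply_mul_le_mul_lintegral hg hg_top hV hμV hc0 hct hcI.le
  have hψW := hψ.mul_apply_le (pos_iff_ne_zero.2 hW0) hWc hct
  rw [← ENNReal.div_eq_inv_mul, ENNReal.le_div_iff_mul_le (Or.inl hV0) (Or.inl hV),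
    ← ENNReal.mul_le_mul_iff_left hc0 hct]
  calc ψ W * V * c = c * ψ W * V := by ring
    _ ≤ a * W * ψ c * V := by gcongr
    _ = a * W * (ψ c * V) := by ring
    _ ≤ a * W * (a * ∫⁻ y, ψ (g y) ∂μ) := by gcongr
    _ = a * (a * W) * ∫⁻ y, ψ (g y) ∂μ := by ring
    _ ≤ c * ∫⁻ y, ψ (g y) ∂μ := by gcongr
    _ = (∫⁻ y, ψ (g y) ∂μ) * c := mul_comm _ _

theorem rpow_apply_le_inv_mul_lintegral {p : ℝ} (hψ : IsAInc p a ψ) (hp : 0 < p) (ha : 1 ≤ a)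
    (hψ0 : ψ 0 = 0) (hg : Measurable g) {M : ℝ≥0∞} (hM : M ≠ ∞) (hgM : ∀ y, g y ≤ M)
    (hV0 : V ≠ 0) (hV : V ≠ ∞) (hμV : μ univ ≤ V) (b : ℝ≥0) :
    ψ (((b / (2 * (a ^ (1 / p)) ^ 2) : ℝ≥0) : ℝ≥0∞) * V⁻¹ * ∫⁻ y, g y ∂μ) ^ (1 / p) ≤
      V⁻¹ * ∫⁻ y, ψ (b * g y) ^ (1 / p) ∂μ := by
  have ha' : 1 ≤ a ^ (1 / p) := NNReal.one_le_rpow ha (by positivity)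
  have hI : ∫⁻ y, b * g y ∂μ ≠ ∞ := by
    refine ne_top_of_le_ne_top ?_ (lintegral_mono fun y => mul_le_mul_right (hgM y) _)
    rw [lintegral_const]
    exact ENNReal.mul_ne_top (ENNReal.mul_ne_top ENNReal.coe_ne_top hM)
      (ne_top_of_le_ne_top hV hμV)
  have hW : 2 * ((a ^ (1 / p) : ℝ≥0) : ℝ≥0∞) ^ 2 *
      (((b / (2 * (a ^ (1 / p)) ^ 2) : ℝ≥0) : ℝ≥0∞) * V⁻¹ * ∫⁻ y, g y ∂μ) ≤
        V⁻¹ * ∫⁻ y, b * g y ∂μ := by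
    have hb : 2 * ((a ^ (1 / p) : ℝ≥0) : ℝ≥0∞) ^ 2 *
        ((b / (2 * (a ^ (1 / p)) ^ 2) : ℝ≥0) : ℝ≥0∞) = b := by
      norm_cast
      exact mul_div_cancel₀ _ (by positivity)
    rw [lintegral_const_mul _ hg, ← mul_assoc, ← mul_assoc, hb, mul_comm (b : ℝ≥0∞) V⁻¹,
      mul_assoc]
  exact (hψ.rpow_inv hp).apply_le_inv_mul_lintegral
    (by simp [hψ0, hp]) ha' (hg.const_mul _)
    (fun y => ENNReal.mul_ne_top ENNReal.coe_ne_top (ne_top_of_le_ne_top hM (hgM y)))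
    hV0 hV hμV hI hW

end IsAInc

end Average

lemma AInc.exists_ae_isAInc {n : ℕ} {Ω : Set (Rn n)} {φ : Rn n → ℝ≥0∞ → ℝ≥0∞} {p : ℝ}
    (h : AInc Ω φ p) :
    ∃ a : ℝ≥0, 1 ≤ a ∧ ∀ᵐ x ∂(volume : Measure (Rn n)), x ∈ Ω → IsAInc p a (φ x) := by
  obtain ⟨a, ha, hae⟩ := h
  exact ⟨a, ha, hae.mono fun x hx hxΩ => isAInc_of_div_rpow_le ha (hx hxΩ)⟩

theorem key_estimate_small_part_general
    (n : ℕ) (Ω : Set (Rn n)) (hΩ : IsOpen Ω)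
    (ω : Rn n → ℝ≥0∞)
    (φ : Rn n → ℝ≥0∞ → ℝ≥0∞) (p : ℝ) (hp0 : 0 < p)
    (hφ : IsWeakPhi Ω φ)
    (β₀ : ℝ≥0) (hβ₀pos : 0 < β₀) (hβ₀le : β₀ ≤ 1)
    (hA0 : ∀ᵐ x ∂(volume : Measure (Rn n)), x ∈ Ω →
      φ x β₀ ≤ 1 ∧ 1 ≤ φ x ((β₀ : ℝ≥0∞)⁻¹))
    (hA2 : A2w Ω ω φ) (hInc : AInc Ω φ p) :
    ∃ β : ℝ≥0, 0 < β ∧ ∃ h : Rn n → ℝ≥0, MemL1wLinf Ω ω h ∧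
      ∀ f : Rn n → ℝ≥0∞, Measurable f → (∀ y, f y ≤ (β₀ : ℝ≥0∞)⁻¹) →
        ∀ (z : Rn n) (r : ℝ), 0 < r →
          ∀ᵐ x ∂(volume : Measure (Rn n)), x ∈ ball z r ∩ Ω →
            (φ x ((β : ℝ≥0∞) * (volume (ball z r))⁻¹ *
                ∫⁻ y in ball z r ∩ Ω, f y)) ^ (1 / p) ≤
              (volume (ball z r))⁻¹ *
                  (∫⁻ y in ball z r ∩ Ω, (φ y (f y)) ^ (1 / p)) +
                (h x : ℝ≥0∞) ^ (1 / p) +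
                (volume (ball z r))⁻¹ *
                  ∫⁻ y in ball z r ∩ Ω, (h y : ℝ≥0∞) ^ (1 / p) := by
  obtain ⟨a, ha, hInc⟩ := hInc.exists_ae_isAInc
  obtain ⟨β₂, hβ₂, -, h, hh, hA2⟩ := hA2 1 one_pos
  set β₁ : ℝ≥0 := (3 * a)⁻¹ ^ p⁻¹ * β₂ * β₀ * β₀
  have hβ₁ : 0 < β₁ := by
    have : 0 < (3 * a)⁻¹ ^ p⁻¹ := NNReal.rpow_pos (by positivity)
    positivity
  refine ⟨β₁ / (2 * (a ^ (1 / p)) ^ 2), by positivity, h, hh, fun f hf hfβ₀ z r hr => ?_⟩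
  have hS : (volume.restrict (ball z r ∩ Ω)) univ ≤ volume (ball z r) := by
    rw [Measure.restrict_apply_univ]; exact measure_mono inter_subset_left
  filter_upwards [hA2, hInc, hφ.map_zero] with x hxA2 hxInc hxZero hx
  have hpointwise : ∀ᵐ y ∂volume.restrict (ball z r ∩ Ω), φ x (β₁ * f y) ^ (1 / p) ≤
      φ y (f y) ^ (1 / p) + (h x : ℝ≥0∞) ^ (1 / p) + (h y : ℝ≥0∞) ^ (1 / p) := by
    rw [ae_restrict_iff' (measurableSet_ball.inter hΩ.measurableSet)]
    filter_upwards [hxA2, hφ.mono, hA0] with y hyA2 hyMono hyA0 hy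
    exact rpow_apply_le_add_of_A2 hp0 (hxInc hx.2) ha (hxZero hx.2) (hyMono hy.2) hβ₀pos hβ₀le
      (hyA0 hy.2).1 (fun s hs => hyA2 hx.2 hy.2 s (by simpa using hs)) (hfβ₀ y)
  calc _ ≤ (volume (ball z r))⁻¹ * ∫⁻ y in ball z r ∩ Ω, φ x (β₁ * f y) ^ (1 / p) :=
        (hxInc hx.2).rpow_apply_le_inv_mul_lintegral hp0 ha (hxZero hx.2) hf
          (ENNReal.inv_ne_top.2 (ENNReal.coe_ne_zero.2 hβ₀pos.ne')) hfβ₀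
          (measure_ball_pos volume z hr).ne' measure_ball_lt_top.ne hS β₁
    _ ≤ (volume (ball z r))⁻¹ * ∫⁻ y in ball z r ∩ Ω, (φ y (f y) ^ (1 / p) +
          (h x : ℝ≥0∞) ^ (1 / p) + (h y : ℝ≥0∞) ^ (1 / p)) := by
        gcongr 1
        exact lintegral_mono_ae hpointwise
    _ ≤ _ := inv_mul_lintegral_add_const_add_le hS _ (hh.1.coe_nnreal_ennreal.pow_const _) _

/-- Key estimate for the part of `f` with small values. -/
theorem key_estimate_small_part
    (n : ℕ) (Ω : Set (Rn n)) (hΩ : IsOpen Ω)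
    (ω : Rn n → ℝ≥0∞) (hw : IsWeight ω)
    (φ : Rn n → ℝ≥0∞ → ℝ≥0∞) (p : ℝ) (hp0 : 0 < p)
    (hφ : IsWeakPhi Ω φ)
    (β₀ : ℝ≥0) (hβ₀pos : 0 < β₀) (hβ₀le : β₀ ≤ 1)
    (hA0 : ∀ᵐ x ∂(volume : Measure (Rn n)), x ∈ Ω →
      φ x β₀ ≤ 1 ∧ 1 ≤ φ x ((β₀ : ℝ≥0∞)⁻¹))
    (hA2 : A2w Ω ω φ) (hInc : AInc Ω φ p) :
    ∃ β : ℝ≥0, 0 < β ∧ ∃ h : Rn n → ℝ≥0, MemL1wLinf Ω ω h ∧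
      ∀ f : Rn n → ℝ≥0∞, Measurable f → (∀ y, f y ≤ (β₀ : ℝ≥0∞)⁻¹) →
        ∀ (z : Rn n) (r : ℝ), 0 < r →
          ∀ᵐ x ∂(volume : Measure (Rn n)), x ∈ ball z r ∩ Ω →
            (φ x ((β : ℝ≥0∞) * (volume (ball z r))⁻¹ *
                ∫⁻ y in ball z r ∩ Ω, f y)) ^ (1 / p) ≤
              (volume (ball z r))⁻¹ *
                  (∫⁻ y in ball z r ∩ Ω, (φ y (f y)) ^ (1 / p)) +
                (h x : ℝ≥0∞) ^ (1 / p) +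
                (volume (ball z r))⁻¹ *
                  ∫⁻ y in ball z r ∩ Ω, (h y : ℝ≥0∞) ^ (1 / p) :=
  key_estimate_small_part_general n Ω hΩ ω φ p hp0 hφ β₀ hβ₀pos hβ₀le hA0 hA2 hInc
end
end
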